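/- arXiv:1410.4725 — 12 statements merged into one kernel-verified Lean document; each statement's English description precedes it below -/
import Mathlib

section
/- In a strictly convex normed plane, for any two distinct points p₁, p₂ and any radius λ ≥ ‖p₁ - p₂‖/2, the set of points x with ‖x - p₁‖ = ‖x - p₂‖ = λ lying in a fixed closed half-plane H⁺ bounded by the line through p₁ and p₂ is a singleton. -/
open Metric

section Aux
variable {E : Type*} [NormedAddCommGroup E] [NormedSpace ℝ E]

private lemma clt_left {a b r1 r2 lam : ℝ} (ha : 0 < a) (hb : 0 ≤ b) (hab : a + b = 1)
    (h1 : r1 < lam) (h2 : r2 ≤ lam) : a * r1 + b * r2 < lam := by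
  have hab' : a * lam + b * lam = lam := by rw [← add_mul, hab, one_mul]
  nlinarith [mul_lt_mul_of_pos_left h1 ha, mul_le_mul_of_nonneg_left h2 hb]

private lemma clt_right {a b r1 r2 lam : ℝ} (ha : 0 ≤ a) (hb : 0 < b) (hab : a + b = 1)
    (h1 : r1 ≤ lam) (h2 : r2 < lam) : a * r1 + b * r2 < lam := by
  have hab' : a * lam + b * lam = lam := by rw [← add_mul, hab, one_mul]
  nlinarith [mul_le_mul_of_nonneg_left h1 ha, mul_lt_mul_of_pos_left h2 hb]

private lemma key_combo (x p : E) {s₁ s₂ t α β : ℝ} (hab : α + β = 1)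
    (ht : α * s₁ + β * s₂ = t) :
    x - t • p = α • (x - s₁ • p) + β • (x - s₂ • p) := by
  have h2 : α • (x - s₁ • p) + β • (x - s₂ • p) = (α + β) • x - (α * s₁ + β * s₂) • p := by
    module
  rw [h2, hab, ht, one_smul]

private lemma interp (x p : E) {s₁ s₂ t : ℝ} (hs : s₁ < s₂) (h1 : s₁ ≤ t) (h2 : t ≤ s₂) :
    ‖x - t • p‖ ≤ ((s₂ - t)/(s₂ - s₁)) * ‖x - s₁ • p‖ + ((t - s₁)/(s₂ - s₁)) * ‖x - s₂ • p‖ := by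
  have hd : s₂ - s₁ ≠ 0 := ne_of_gt (by linarith)
  have hab : (s₂ - t)/(s₂ - s₁) + (t - s₁)/(s₂ - s₁) = 1 := by field_simp; ring
  have ht : ((s₂ - t)/(s₂ - s₁)) * s₁ + ((t - s₁)/(s₂ - s₁)) * s₂ = t := by
    field_simp; ring
  rw [key_combo x p hab ht]
  have hα : 0 ≤ (s₂ - t)/(s₂ - s₁) := div_nonneg (by linarith) (by linarith)
  have hβ : 0 ≤ (t - s₁)/(s₂ - s₁) := div_nonneg (by linarith) (by linarith)
  calc ‖((s₂ - t)/(s₂ - s₁)) • (x - s₁ • p) + ((t - s₁)/(s₂ - s₁)) • (x - s₂ • p)‖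
      ≤ ‖((s₂ - t)/(s₂ - s₁)) • (x - s₁ • p)‖ + ‖((t - s₁)/(s₂ - s₁)) • (x - s₂ • p)‖ :=
        norm_add_le _ _
    _ = ((s₂ - t)/(s₂ - s₁)) * ‖x - s₁ • p‖ + ((t - s₁)/(s₂ - s₁)) * ‖x - s₂ • p‖ := by
        rw [norm_smul, norm_smul, Real.norm_eq_abs, Real.norm_eq_abs,
          abs_of_nonneg hα, abs_of_nonneg hβ]

private lemma lineE_aux (x p : E) {lam s₁ s₂ t : ℝ} (hs1 : s₁ < t) (hs2 : t < s₂)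
    (ht : ‖x - t • p‖ = lam) (hA : ‖x - s₁ • p‖ ≤ lam) (hB : ‖x - s₂ • p‖ ≤ lam)
    (hstrict : ‖x - s₁ • p‖ < lam ∨ ‖x - s₂ • p‖ < lam) : False := by
  have hI := interp x p (lt_trans hs1 hs2) hs1.le hs2.le
  have hα : 0 < (s₂ - t)/(s₂ - s₁) := div_pos (by linarith) (by linarith)
  have hβ : 0 < (t - s₁)/(s₂ - s₁) := div_pos (by linarith) (by linarith)
  have hd : s₂ - s₁ ≠ 0 := ne_of_gt (by linarith)
  have hab : (s₂ - t)/(s₂ - s₁) + (t - s₁)/(s₂ - s₁) = 1 := by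
    field_simp; ring
  rw [ht] at hI
  rcases hstrict with h | h
  · have := clt_left hα hβ.le hab h hB; linarith
  · have := clt_right hα.le hβ hab hA h; linarith

private lemma lineE (x p : E) {lam τ : ℝ}
    (h0 : ‖x‖ = lam) (h1 : ‖x - p‖ = lam)
    (hτ : ‖x - τ • p‖ < lam) (hτ1 : ‖x - (1 + τ) • p‖ < lam) : False := by
  have e0 : ‖x - (0 : ℝ) • p‖ = lam := by simpa using h0
  have e1 : ‖x - (1 : ℝ) • p‖ = lam := by simpa using h1
  rcases lt_trichotomy τ 0 with h | h | h
  · rcases lt_trichotomy (1 + τ) 0 with h' | h' | h'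
    · exact lineE_aux x p h' (by norm_num : (0:ℝ) < 1) e0 hτ1.le e1.le (Or.inl hτ1)
    · rw [h'] at hτ1; rw [show ‖x - (0:ℝ) • p‖ = ‖x‖ by simp] at *; linarith [e0, hτ1]
    · exact lineE_aux x p (show τ < 0 from h) h' e0 hτ.le hτ1.le (Or.inl hτ)
  · subst h; simp at hτ; linarith
  · rcases lt_trichotomy τ 1 with h' | h' | h'
    · exact lineE_aux x p (show τ < 1 from h') (by linarith : (1:ℝ) < 1 + τ) e1 hτ.le hτ1.le
        (Or.inl hτ)
    · subst h'; rw [show x - (1:ℝ) • p = x - p by simp] at hτ; linarith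
    · exact lineE_aux x p (show (0:ℝ) < 1 from one_pos) h' e1 e0.le hτ.le (Or.inr hτ)

end Aux
section Aux2
variable {E : Type*} [NormedAddCommGroup E] [NormedSpace ℝ E]

private lemma colinear3 [StrictConvexSpace ℝ E] {v : E} (hv : v ≠ 0) {lam : ℝ} (x : E)
    {t₁ t₂ t₃ : ℝ} (h12 : t₁ < t₂) (h23 : t₂ < t₃)
    (n1 : ‖x - t₁ • v‖ = lam) (n2 : ‖x - t₂ • v‖ = lam) (n3 : ‖x - t₃ • v‖ = lam) : False := by
  have h13 : t₁ < t₃ := lt_trans h12 h23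
  have hd : t₃ - t₁ ≠ 0 := ne_of_gt (by linarith)
  have hne : x - t₁ • v ≠ x - t₃ • v := by
    intro hE
    apply hv
    have h1 : t₁ • v = t₃ • v := by
      have h := sub_eq_sub_iff_sub_eq_sub.1 hE
      simpa [sub_eq_zero] using h.symm
    have h2 : (t₁ - t₃) • v = 0 := by rw [sub_smul, h1, sub_self]
    rcases smul_eq_zero.1 h2 with h | h
    · exact absurd h (by intro hh; apply hd; linarith [sub_eq_zero.1 (by linarith : t₁ - t₃ = 0)])
    · exact h
  have hα : 0 < (t₃ - t₂)/(t₃ - t₁) := div_pos (by linarith) (by linarith)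
  have hβ : 0 < (t₂ - t₁)/(t₃ - t₁) := div_pos (by linarith) (by linarith)
  have hab : (t₃ - t₂)/(t₃ - t₁) + (t₂ - t₁)/(t₃ - t₁) = 1 := by field_simp; ring
  have ht : ((t₃ - t₂)/(t₃ - t₁)) * t₁ + ((t₂ - t₁)/(t₃ - t₁)) * t₃ = t₂ := by
    field_simp; ring
  have hk := key_combo x v hab ht
  have := norm_combo_lt_of_ne n1.le n3.le hne hα hβ hab
  rw [← hk, n2] at this
  exact lt_irrefl _ this

private lemma mem_span_line {E : Type*} [NormedAddCommGroup E] [NormedSpace ℝ E]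
    [FiniteDimensional ℝ E] (hdim : Module.finrank ℝ E = 2)
    {f : E →L[ℝ] ℝ} (hf : f ≠ 0) {v : E} (hv : v ≠ 0) (hfv : f v = 0) {d : E} (hd : f d = 0) :
    ∃ t : ℝ, d = t • v := by
  set g := (f : E →ₗ[ℝ] ℝ) with hg
  have hg0 : g ≠ 0 := by
    intro h
    apply hf
    ext y
    exact LinearMap.congr_fun h y
  have hrange : LinearMap.range g = ⊤ := by
    rcases Ideal.eq_bot_or_top (LinearMap.range g) with h | h
    · exact absurd (LinearMap.range_eq_bot.1 h) hg0
    · exact h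
  have hker : Module.finrank ℝ (LinearMap.ker g) = 1 := by
    have h := LinearMap.finrank_range_add_finrank_ker g
    rw [hrange, hdim] at h
    rw [show Module.finrank ℝ (⊤ : Submodule ℝ ℝ) = 1 by simp] at h
    omega
  have hspan : (Submodule.span ℝ {v}) = LinearMap.ker g := by
    apply Submodule.eq_of_le_of_finrank_eq
    · rw [Submodule.span_le, Set.singleton_subset_iff]
      exact LinearMap.mem_ker.2 hfv
    · rw [finrank_span_singleton hv, hker]
  have hdm : d ∈ Submodule.span ℝ ({v} : Set E) := by
    rw [hspan]; exact LinearMap.mem_ker.2 hd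
  rcases Submodule.mem_span_singleton.1 hdm with ⟨t, ht⟩
  exact ⟨t, ht.symm⟩

end Aux2
section Aux3
variable {E : Type*} [NormedAddCommGroup E] [NormedSpace ℝ E]

private lemma smul_norm_le (c : ℝ) (hc : 0 ≤ c) (y : E) : ‖c • y‖ = c * ‖y‖ := by
  rw [norm_smul, Real.norm_eq_abs, abs_of_nonneg hc]

private lemma corner_aux {v : E} {lam : ℝ} (hlam : 0 < lam) {f : E →L[ℝ] ℝ}
    {w : E} (hw : f w = 1) (hfv : f v = 0) {u : E}
    (hu0 : ‖u‖ ≤ lam) (huv : ‖u - v‖ ≤ lam)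
    (hmax : ∀ y, ‖y‖ ≤ lam → ‖y - v‖ ≤ lam → f y ≤ f u) : ‖u - v‖ = lam := by
  by_contra hlt'
  have hlt : ‖u - v‖ < lam := lt_of_le_of_ne huv hlt'
  -- Step 1: u maximizes f over the whole closed ball of radius lam around 0
  have s1 : ∀ y : E, ‖y‖ ≤ lam → f y ≤ f u := by
    intro y hy
    by_contra hy'
    push_neg at hy'
    set t := min 1 ((lam - ‖u - v‖)/(‖y - u‖ + 1)) with htdef
    have hyu : (0:ℝ) < ‖y - u‖ + 1 := by positivity
    have ht0 : 0 < t := lt_min one_pos (div_pos (by linarith) hyu)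
    have ht1 : t ≤ 1 := min_le_left _ _
    have hz0 : ‖u + t • (y - u)‖ ≤ lam := by
      have he : u + t • (y - u) = (1 - t) • u + t • y := by module
      rw [he]
      calc ‖(1 - t) • u + t • y‖ ≤ ‖(1 - t) • u‖ + ‖t • y‖ := norm_add_le _ _
        _ = (1 - t) * ‖u‖ + t * ‖y‖ := by
            rw [smul_norm_le _ (by linarith), smul_norm_le _ ht0.le]
        _ ≤ (1 - t) * lam + t * lam := by
            gcongr <;> linarith
        _ = lam := by ring
    have hzv : ‖u + t • (y - u) - v‖ ≤ lam := by
      have he : u + t • (y - u) - v = (u - v) + t • (y - u) := by module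
      rw [he]
      have h3 : ‖t • (y - u)‖ ≤ lam - ‖u - v‖ := by
        rw [smul_norm_le _ ht0.le]
        have htr : t ≤ (lam - ‖u - v‖)/(‖y - u‖ + 1) := min_le_right _ _
        calc t * ‖y - u‖ ≤ ((lam - ‖u - v‖)/(‖y - u‖ + 1)) * ‖y - u‖ := by
              gcongr
          _ ≤ lam - ‖u - v‖ := by
              rw [div_mul_eq_mul_div, div_le_iff₀ hyu]
              nlinarith [norm_nonneg (y - u)]
      calc ‖(u - v) + t • (y - u)‖ ≤ ‖u - v‖ + ‖t • (y - u)‖ := norm_add_le _ _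
        _ ≤ lam := by linarith
    have hle := hmax _ hz0 hzv
    have hfz : f (u + t • (y - u)) = f u + t * (f y - f u) := by
      rw [map_add, map_smul, map_sub, smul_eq_mul]
    rw [hfz] at hle
    nlinarith
  -- Step 2: midpoint of u and u - v is strictly inside the ball, bump it
  have hmn : ‖u - (1/2 : ℝ) • v‖ < lam := by
    have he : u - (1/2 : ℝ) • v = (1/2 : ℝ) • u + (1/2 : ℝ) • (u - v) := by module
    rw [he]
    calc ‖(1/2 : ℝ) • u + (1/2 : ℝ) • (u - v)‖
        ≤ ‖(1/2 : ℝ) • u‖ + ‖(1/2 : ℝ) • (u - v)‖ := norm_add_le _ _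
      _ = (1/2) * ‖u‖ + (1/2) * ‖u - v‖ := by
          rw [smul_norm_le _ (by norm_num), smul_norm_le _ (by norm_num)]
      _ < lam := by linarith
  have hfm : f (u - (1/2 : ℝ) • v) = f u := by
    simp [map_sub, map_smul, hfv]
  set ε := (lam - ‖u - (1/2 : ℝ) • v‖)/(‖w‖ + 1) with hε
  have hw1 : (0:ℝ) < ‖w‖ + 1 := by positivity
  have hε0 : 0 < ε := div_pos (by linarith) hw1
  have hin : ‖u - (1/2 : ℝ) • v + ε • w‖ ≤ lam := by
    calc ‖u - (1/2 : ℝ) • v + ε • w‖ ≤ ‖u - (1/2 : ℝ) • v‖ + ‖ε • w‖ := norm_add_le _ _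
      _ = ‖u - (1/2 : ℝ) • v‖ + ε * ‖w‖ := by rw [smul_norm_le _ hε0.le]
      _ ≤ lam := by
          have : ε * ‖w‖ ≤ lam - ‖u - (1/2 : ℝ) • v‖ := by
            rw [hε, div_mul_eq_mul_div, div_le_iff₀ hw1]
            nlinarith [norm_nonneg w]
          linarith
  have hc := s1 _ hin
  have : f (u - (1/2 : ℝ) • v + ε • w) = f u + ε := by
    rw [map_add, hfm, map_smul, hw, smul_eq_mul, mul_one]
  rw [this] at hc
  linarith

private lemma exists_max_corner [FiniteDimensional ℝ E] {v : E} (hv : v ≠ 0) {lam : ℝ}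
    (hlam : ‖v‖ / 2 ≤ lam) {f : E →L[ℝ] ℝ} {w : E} (hw : f w = 1) (hfv : f v = 0) :
    ∃ u : E, ‖u‖ = lam ∧ ‖u - v‖ = lam ∧ ∀ y, ‖y‖ ≤ lam → ‖y - v‖ ≤ lam → f y ≤ f u := by
  have hv0 : 0 < ‖v‖ := norm_pos_iff.2 hv
  have hlam0 : 0 < lam := lt_of_lt_of_le (by linarith) hlam
  set K := Metric.closedBall (0:E) lam ∩ Metric.closedBall v lam with hK
  have hKc : IsCompact K :=
    (isCompact_closedBall (0:E) lam).inter_right Metric.isClosed_closedBall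
  have hhalf0 : ‖(1/2 : ℝ) • v‖ = ‖v‖/2 := by
    rw [smul_norm_le _ (by norm_num)]; ring
  have hhalfv : ‖(1/2 : ℝ) • v - v‖ = ‖v‖/2 := by
    rw [show (1/2 : ℝ) • v - v = -((1/2 : ℝ) • v) by module, norm_neg, hhalf0]
  have hKne : ((1/2:ℝ) • v) ∈ K := by
    constructor
    · rw [Metric.mem_closedBall, dist_eq_norm, sub_zero, hhalf0]; exact hlam
    · rw [Metric.mem_closedBall, dist_eq_norm, hhalfv]; exact hlam
  obtain ⟨u, huK, hmax⟩ := hKc.exists_isMaxOn ⟨_, hKne⟩ (f.continuous.continuousOn)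
  have hmax' : ∀ y, ‖y‖ ≤ lam → ‖y - v‖ ≤ lam → f y ≤ f u := by
    intro y h1 h2
    exact hmax (Set.mem_inter (by rwa [Metric.mem_closedBall, dist_eq_norm, sub_zero])
      (by rwa [Metric.mem_closedBall, dist_eq_norm]))
  have hu0 : ‖u‖ ≤ lam := by
    have := huK.1; rwa [Metric.mem_closedBall, dist_eq_norm, sub_zero] at this
  have huv : ‖u - v‖ ≤ lam := by
    have := huK.2; rwa [Metric.mem_closedBall, dist_eq_norm] at this
  have h2 : ‖u - v‖ = lam := corner_aux hlam0 hw hfv hu0 huv hmax'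
  have hfuv : f (u - v) = f u := by simp [map_sub, hfv]
  have h1 : ‖u‖ = lam := by
    have hfv' : f (-v) = 0 := by simp [hfv]
    have hmax'' : ∀ y, ‖y‖ ≤ lam → ‖y - (-v)‖ ≤ lam → f y ≤ f (u - v) := by
      intro y hy1 hy2
      rw [sub_neg_eq_add] at hy2
      have := hmax' (y + v) hy2 (by simpa using hy1)
      rw [map_add, hfv, add_zero] at this
      rw [hfuv]; exact this
    have := corner_aux hlam0 hw hfv' (u := u - v) (v := -v)
      (by rw [h2]) (by simpa using hu0) hmax''
    simpa using this
  exact ⟨u, h1, h2, hmax'⟩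

end Aux3
section Aux4
variable {E : Type*} [NormedAddCommGroup E] [NormedSpace ℝ E] [StrictConvexSpace ℝ E]
  [FiniteDimensional ℝ E]

private lemma pair_eq (hdim : Module.finrank ℝ E = 2) {f : E →L[ℝ] ℝ} (hf : f ≠ 0)
    {v : E} (hv : v ≠ 0) (hfv : f v = 0) {lam : ℝ} {x y : E} (hxy : x ≠ y)
    (hx1 : ‖x‖ = lam) (hx2 : ‖x - v‖ = lam) (hy1 : ‖y‖ = lam) (hy2 : ‖y - v‖ = lam)
    (hfeq : f x = f y) : False := by
  have hd : f (x - y) = 0 := by rw [map_sub, hfeq, sub_self]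
  obtain ⟨s, hs⟩ := mem_span_line hdim hf hv hfv hd
  have hs0 : s ≠ 0 := by
    intro h; apply hxy; rw [h, zero_smul] at hs; exact sub_eq_zero.1 hs
  -- x = y - (-s) • v ; x - v = y - (1 - s) • v ; y = y - 0 • v ; y - v = y - 1 • v
  have ex : y - (-s) • v = x := by
    rw [neg_smul, sub_neg_eq_add, ← hs]; abel
  have exv : y - (1 - s) • v = x - v := by
    rw [sub_smul, one_smul, ← hs]; abel
  have e0 : y - (0:ℝ) • v = y := by simp
  have e1 : y - (1:ℝ) • v = y - v := by simp
  rcases lt_trichotomy s 0 with h | h | h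
  · -- -s > 0 : use (0, something) ... here s < 0, use points at t = -s, with 1 and 1 - s
    -- t-values: 0 ↦ y, 1 ↦ y - v, -s ↦ x, 1 - s ↦ x - v
    rcases lt_trichotomy (-s) 1 with h' | h' | h'
    · exact colinear3 hv (lam := lam) y (show (0:ℝ) < -s by linarith) h'
        (by rw [e0]; exact hy1) (by rw [ex]; exact hx1) (by rw [e1]; exact hy2)
    · -- -s = 1 : use 0 < 1 < 1 - s = 2
      exact colinear3 hv (lam := lam) y (show (0:ℝ) < 1 by norm_num) (show (1:ℝ) < 1 - s by linarith)
        (by rw [e0]; exact hy1) (by rw [e1]; exact hy2) (by rw [exv]; exact hx2)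
    · exact colinear3 hv (lam := lam) y (show (0:ℝ) < 1 by norm_num) h'
        (by rw [e0]; exact hy1) (by rw [e1]; exact hy2) (by rw [ex]; exact hx1)
  · exact hs0 h
  · -- s > 0 : -s < 0 < 1
    exact colinear3 hv (lam := lam) y (show -s < (0:ℝ) by linarith) (show (0:ℝ) < 1 by norm_num)
      (by rw [ex]; exact hx1) (by rw [e0]; exact hy1) (by rw [e1]; exact hy2)

private lemma mid_lemma (hdim : Module.finrank ℝ E = 2) {f : E →L[ℝ] ℝ} (hf : f ≠ 0)
    {v : E} (hv : v ≠ 0) (hfv : f v = 0) {lam : ℝ} {x y z : E}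
    (hx1 : ‖x‖ = lam) (hx2 : ‖x - v‖ = lam) (hy1 : ‖y‖ = lam) (hy2 : ‖y - v‖ = lam)
    (hz1 : ‖z‖ = lam) (hz2 : ‖z - v‖ = lam)
    (hxy : f x < f y) (hyz : f y < f z) : False := by
  have hxz : f x < f z := lt_trans hxy hyz
  have hdz : (0:ℝ) < f z - f x := by linarith
  set μ := (f z - f y)/(f z - f x) with hμ
  have hμ0 : 0 < μ := div_pos (by linarith) hdz
  have hμ1 : μ < 1 := (div_lt_one hdz).2 (by linarith)
  have hd : f (y - (μ • x + (1 - μ) • z)) = 0 := by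
    rw [map_sub, map_add, map_smul, map_smul, smul_eq_mul, smul_eq_mul, hμ]
    field_simp
    ring
  obtain ⟨τ, hτ⟩ := mem_span_line hdim hf hv hfv hd
  have combo1 : y - τ • v = μ • x + (1 - μ) • z := by
    rw [← hτ]; abel
  have hne1 : x ≠ z := by intro h; rw [h] at hxz; exact lt_irrefl _ hxz
  have n1 : ‖y - τ • v‖ < lam := by
    rw [combo1]
    exact norm_combo_lt_of_ne hx1.le hz1.le hne1 hμ0 (by linarith) (by ring)
  have combo2 : y - (1 + τ) • v = μ • (x - v) + (1 - μ) • (z - v) := by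
    have h2 : μ • (x - v) + (1 - μ) • (z - v) = (μ • x + (1 - μ) • z) - v := by module
    rw [h2, ← combo1]; module
  have hne2 : x - v ≠ z - v := by
    intro h; exact hne1 (by simpa [sub_left_inj] using h)
  have n2 : ‖y - (1 + τ) • v‖ < lam := by
    rw [combo2]
    exact norm_combo_lt_of_ne hx2.le hz2.le hne2 hμ0 (by linarith) (by ring)
  exact lineE y v hy1 hy2 n1 n2

private lemma three_solutions (hdim : Module.finrank ℝ E = 2) {f : E →L[ℝ] ℝ} (hf : f ≠ 0)
    {v : E} (hv : v ≠ 0) (hfv : f v = 0) {lam : ℝ} {a b c : E}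
    (hab : a ≠ b) (hac : a ≠ c) (hbc : b ≠ c)
    (ha1 : ‖a‖ = lam) (ha2 : ‖a - v‖ = lam) (hb1 : ‖b‖ = lam) (hb2 : ‖b - v‖ = lam)
    (hc1 : ‖c‖ = lam) (hc2 : ‖c - v‖ = lam) : False := by
  rcases lt_trichotomy (f a) (f b) with h1 | h1 | h1
  · rcases lt_trichotomy (f b) (f c) with h2 | h2 | h2
    · exact mid_lemma hdim hf hv hfv ha1 ha2 hb1 hb2 hc1 hc2 h1 h2
    · exact pair_eq hdim hf hv hfv hbc hb1 hb2 hc1 hc2 h2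
    · rcases lt_trichotomy (f a) (f c) with h3 | h3 | h3
      · exact mid_lemma hdim hf hv hfv ha1 ha2 hc1 hc2 hb1 hb2 h3 h2
      · exact pair_eq hdim hf hv hfv hac ha1 ha2 hc1 hc2 h3
      · exact mid_lemma hdim hf hv hfv hc1 hc2 ha1 ha2 hb1 hb2 h3 h1
  · exact pair_eq hdim hf hv hfv hab ha1 ha2 hb1 hb2 h1
  · rcases lt_trichotomy (f a) (f c) with h2 | h2 | h2
    · exact mid_lemma hdim hf hv hfv hb1 hb2 ha1 ha2 hc1 hc2 h1 h2
    · exact pair_eq hdim hf hv hfv hac ha1 ha2 hc1 hc2 h2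
    · rcases lt_trichotomy (f b) (f c) with h3 | h3 | h3
      · exact mid_lemma hdim hf hv hfv hb1 hb2 hc1 hc2 ha1 ha2 h3 h2
      · exact pair_eq hdim hf hv hfv hbc hb1 hb2 hc1 hc2 h3
      · exact mid_lemma hdim hf hv hfv hc1 hc2 hb1 hb2 ha1 ha2 h3 h1

private lemma tight_case {v : E} {lam : ℝ} (h : ‖v‖ = 2 * lam) {u : E}
    (h0 : ‖u‖ = lam) (h1 : ‖u - v‖ = lam) : u = (1/2 : ℝ) • v := by
  have hnv : ‖v - u‖ = lam := by rw [norm_sub_rev]; exact h1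
  have hadd : ‖u + (v - u)‖ = ‖u‖ + ‖v - u‖ := by
    rw [add_sub_cancel, h0, hnv, h]; ring
  have heq : u = v - u := eq_of_norm_eq_of_norm_add_eq (by rw [h0, hnv]) hadd
  have h2 : (2:ℝ) • u = v := by
    rw [two_smul]; nth_rewrite 2 [heq]; abel
  rw [← h2, smul_smul]; norm_num
end Aux4
theorem sphere_inter_halfplane_singleton
    {E : Type*} [NormedAddCommGroup E] [NormedSpace ℝ E] [StrictConvexSpace ℝ E]
    (hdim : Module.finrank ℝ E = 2)
    (p₁ p₂ : E) (hne : p₁ ≠ p₂) (lam : ℝ) (hlam : ‖p₁ - p₂‖ / 2 ≤ lam)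
    (f : E →L[ℝ] ℝ) (hf : f ≠ 0) (hfp : f p₁ = f p₂) :
    ∃! x : E, ‖x - p₁‖ = lam ∧ ‖x - p₂‖ = lam ∧ f p₁ ≤ f x := by
  haveI : FiniteDimensional ℝ E := FiniteDimensional.of_finrank_eq_succ (n := 1) hdim
  set v := p₂ - p₁ with hvdef
  have hv : v ≠ 0 := sub_ne_zero.2 hne.symm
  have hv0 : 0 < ‖v‖ := norm_pos_iff.2 hv
  have hfv : f v = 0 := by rw [hvdef, map_sub, hfp]; ring
  have hnv : ‖v‖ / 2 ≤ lam := by rwa [hvdef, norm_sub_rev]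
  have hlam0 : 0 < lam := lt_of_lt_of_le (by linarith) hnv
  obtain ⟨w₀, hw₀⟩ : ∃ w₀, f w₀ ≠ 0 := by
    by_contra h
    push_neg at h
    exact hf (by ext x; simp [h x])
  set w := (f w₀)⁻¹ • w₀ with hwdef
  have hw : f w = 1 := by
    rw [hwdef, map_smul, smul_eq_mul, inv_mul_cancel₀ hw₀]
  obtain ⟨u, hu1, hu2, humax⟩ := exists_max_corner hv hnv hw hfv
  have hhalfmem : ‖(1/2:ℝ) • v‖ ≤ lam ∧ ‖(1/2:ℝ) • v - v‖ ≤ lam := by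
    constructor
    · rw [smul_norm_le _ (by norm_num)]; linarith
    · rw [show (1/2:ℝ) • v - v = -((1/2:ℝ) • v) by module, norm_neg,
        smul_norm_le _ (by norm_num)]; linarith
  have hu3 : 0 ≤ f u := by
    have h := humax _ hhalfmem.1 hhalfmem.2
    rw [map_smul, hfv, smul_eq_mul, mul_zero] at h
    exact h
  refine ⟨p₁ + u, ⟨by simpa using hu1,
    by rw [show p₁ + u - p₂ = u - v by rw [hvdef]; abel]; exact hu2,
    by rw [map_add]; linarith⟩, ?_⟩
  rintro y ⟨hy1, hy2, hy3⟩
  have k1 : ‖y - p₁‖ = lam := hy1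
  have k2 : ‖y - p₁ - v‖ = lam := by
    rw [show y - p₁ - v = y - p₂ by rw [hvdef]; abel]; exact hy2
  have k3 : 0 ≤ f (y - p₁) := by rw [map_sub]; linarith
  suffices h : y - p₁ = u by
    rw [← h]; abel
  by_contra hne2
  rcases eq_or_lt_of_le hnv with heq | hlt
  · -- tight case : lam = ‖v‖/2
    have hnorm : ‖v‖ = 2 * lam := by linarith
    have e1 := tight_case hnorm hu1 hu2
    have e2 := tight_case hnorm k1 k2
    exact hne2 (e2.trans e1.symm)
  · -- slack case: produce a third corner with f < 0
    have hfw' : (-f) (-w) = 1 := by simp [hw]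
    have hfv' : (-f) v = 0 := by simp [hfv]
    obtain ⟨um, hm1, hm2, hmmax⟩ := exists_max_corner (f := -f) hv hnv hfw' hfv'
    have hmlt : f um < 0 := by
      set ε := (lam - ‖v‖/2)/(‖w‖ + 1) with hε
      have hw1 : (0:ℝ) < ‖w‖ + 1 := by positivity
      have hε0 : 0 < ε := div_pos (by linarith) hw1
      have hεw : ε * ‖w‖ ≤ lam - ‖v‖/2 := by
        rw [hε, div_mul_eq_mul_div, div_le_iff₀ hw1]
        nlinarith [norm_nonneg w]
      have hp1 : ‖(1/2:ℝ) • v - ε • w‖ ≤ lam := by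
        calc ‖(1/2:ℝ) • v - ε • w‖ ≤ ‖(1/2:ℝ) • v‖ + ‖ε • w‖ := norm_sub_le _ _
          _ = ‖v‖/2 + ε * ‖w‖ := by
              rw [smul_norm_le _ (by norm_num), smul_norm_le _ hε0.le]; ring_nf
          _ ≤ lam := by linarith
      have hp2 : ‖(1/2:ℝ) • v - ε • w - v‖ ≤ lam := by
        rw [show (1/2:ℝ) • v - ε • w - v = -((1/2:ℝ) • v + ε • w) by module, norm_neg]
        calc ‖(1/2:ℝ) • v + ε • w‖ ≤ ‖(1/2:ℝ) • v‖ + ‖ε • w‖ := norm_add_le _ _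
          _ = ‖v‖/2 + ε * ‖w‖ := by
              rw [smul_norm_le _ (by norm_num), smul_norm_le _ hε0.le]; ring_nf
          _ ≤ lam := by linarith
      have hcmp := hmmax _ hp1 hp2
      have hval : f ((1/2:ℝ) • v - ε • w) = -ε := by
        rw [map_sub, map_smul, map_smul, hfv, hw, smul_eq_mul, smul_eq_mul]; ring
      simp only [ContinuousLinearMap.neg_apply, neg_le_neg_iff] at hcmp
      rw [hval] at hcmp
      linarith
    have hn1 : um ≠ u := by
      intro h; rw [h] at hmlt; linarith
    have hn2 : um ≠ y - p₁ := by
      intro h; rw [h] at hmlt; linarith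
    exact three_solutions hdim hf hv hfv hn1 hn2 (fun h => hne2 h.symm)
      hm1 hm2 hu1 hu2 k1 k2
end

section
/- In a strictly convex normed plane, if two distinct points x and y both satisfy ‖x - p₁‖ = ‖x - p₂‖ = λ and ‖y - p₁‖ = ‖y - p₂‖ = λ for distinct points p₁, p₂ and some λ > 0, then x and y lie on opposite sides of (or on) the line through p₁ and p₂; in particular they cannot both lie strictly in the same open half-plane bounded by that line. -/
open Metric Module

section Aux

variable {E : Type*} [NormedAddCommGroup E] [NormedSpace ℝ E]

/-- A point with parameter strictly between two others lies in the open segment. -/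
lemma aux_mem_openSegment (u e : E) {r s t : ℝ} (h1 : r < s) (h2 : s < t) :
    u + s • e ∈ openSegment ℝ (u + r • e) (u + t • e) := by
  have htr : (0:ℝ) < t - r := by linarith
  refine ⟨(t - s) / (t - r), (s - r) / (t - r), div_pos (by linarith) htr,
    div_pos (by linarith) htr, ?_, ?_⟩
  · field_simp; ring
  · match_scalars <;> field_simp <;> ring

/-- Strict convexity of closed balls: a point of the open segment between two points of
a closed ball lies in the open ball. -/
lemma aux_strict [StrictConvexSpace ℝ E] {p : E} {lam : ℝ} (hlam : 0 < lam) {a b m : E}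
    (ha : ‖a - p‖ ≤ lam) (hb : ‖b - p‖ ≤ lam) (hab : a ≠ b)
    (hm : m ∈ openSegment ℝ a b) : ‖m - p‖ < lam := by
  have ha' : a ∈ closedBall p lam := mem_closedBall_iff_norm.2 ha
  have hb' : b ∈ closedBall p lam := mem_closedBall_iff_norm.2 hb
  have := (strictConvex_closedBall ℝ p lam).openSegment_subset ha' hb' hab hm
  rw [interior_closedBall p hlam.ne'] at this
  exact mem_ball_iff_norm.1 this

/-- In a 2-dimensional space, two points with the same value of a nonzero functional `f`
differ by a multiple of any fixed nonzero kernel vector. -/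
lemma aux_param (hdim : finrank ℝ E = 2) (f : E →L[ℝ] ℝ) (hf : f ≠ 0)
    {τ : E} (hτ : τ ≠ 0) (hfτ : f τ = 0) {u v : E} (h : f u = f v) :
    ∃ s : ℝ, u = v + s • τ := by
  have : FiniteDimensional ℝ E := FiniteDimensional.of_finrank_pos (by rw [hdim]; norm_num)
  obtain ⟨w, hw⟩ : ∃ w, f w ≠ 0 := by
    by_contra hcon
    push_neg at hcon
    exact hf (by ext v; simpa using hcon v)
  have hsurj : Function.Surjective (f : E →ₗ[ℝ] ℝ) := by
    intro r
    refine ⟨(r / f w) • w, ?_⟩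
    simp only [LinearMap.coe_coe, map_smul, smul_eq_mul]
    field_simp
    rfl
  have hrange : LinearMap.range (f : E →ₗ[ℝ] ℝ) = ⊤ := LinearMap.range_eq_top.2 hsurj
  have hkerrank : finrank ℝ (LinearMap.ker (f : E →ₗ[ℝ] ℝ)) = 1 := by
    have h1 := LinearMap.finrank_range_add_finrank_ker (f : E →ₗ[ℝ] ℝ)
    rw [hrange, finrank_top, hdim] at h1
    have : finrank ℝ ℝ = 1 := finrank_self ℝ
    omega
  have hker : Submodule.span ℝ {τ} = LinearMap.ker (f : E →ₗ[ℝ] ℝ) := by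
    apply Submodule.eq_of_le_of_finrank_eq
    · rw [Submodule.span_singleton_le_iff_mem]
      exact LinearMap.mem_ker.2 (by simpa using hfτ)
    · rw [hkerrank, finrank_span_singleton hτ]
  have hmem : u - v ∈ LinearMap.ker (f : E →ₗ[ℝ] ℝ) := by
    rw [LinearMap.mem_ker]
    simp [h]
  rw [← hker, Submodule.mem_span_singleton] at hmem
  obtain ⟨s, hs⟩ := hmem
  exact ⟨s, by rw [hs]; abel⟩

/-- The main argument, assuming `f x ≤ f y`. -/
lemma aux_main [StrictConvexSpace ℝ E]
    (hdim : finrank ℝ E = 2)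
    (p₁ p₂ : E) (hp : p₁ ≠ p₂) (lam : ℝ) (hlam : 0 < lam)
    (x y : E) (hxy : x ≠ y)
    (hx₁ : ‖x - p₁‖ = lam) (hx₂ : ‖x - p₂‖ = lam)
    (hy₁ : ‖y - p₁‖ = lam) (hy₂ : ‖y - p₂‖ = lam)
    (f : E →L[ℝ] ℝ) (hf : f ≠ 0) (hfp : f p₁ = f p₂)
    (hfx : f p₁ < f x) (hfy : f p₁ < f y) (hle : f x ≤ f y) : False := by
  set τ : E := p₂ - p₁ with hτdef
  have hτ : τ ≠ 0 := sub_ne_zero.2 (Ne.symm hp)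
  have hτn : (0:ℝ) < ‖τ‖ := norm_pos_iff.2 hτ
  have hfτ : f τ = 0 := by simp [hτdef, hfp]
  have hxτ : ‖(x - τ) - p₁‖ = lam := by
    have : (x - τ) - p₁ = x - p₂ := by simp [hτdef]; abel
    rw [this]; exact hx₂
  have hyτ : ‖(y - τ) - p₁‖ = lam := by
    have : (y - τ) - p₁ = y - p₂ := by simp [hτdef]; abel
    rw [this]; exact hy₂
  -- ‖τ‖ < 2 lam via the midpoint of x and y
  have hτlt : ‖τ‖ < 2 * lam := by
    have hm : (1/2 : ℝ) • x + (1/2 : ℝ) • y ∈ openSegment ℝ x y :=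
      ⟨1/2, 1/2, by norm_num, by norm_num, by norm_num, rfl⟩
    have h1 : ‖((1/2 : ℝ) • x + (1/2 : ℝ) • y) - p₁‖ < lam :=
      aux_strict hlam hx₁.le hy₁.le hxy hm
    have h2 : ‖((1/2 : ℝ) • x + (1/2 : ℝ) • y) - p₂‖ < lam :=
      aux_strict hlam hx₂.le hy₂.le hxy hm
    calc ‖τ‖ = ‖(p₂ - ((1/2 : ℝ) • x + (1/2 : ℝ) • y)) + (((1/2 : ℝ) • x + (1/2 : ℝ) • y) - p₁)‖ := by
          rw [hτdef]; congr 1; abel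
      _ ≤ ‖p₂ - ((1/2 : ℝ) • x + (1/2 : ℝ) • y)‖ + ‖((1/2 : ℝ) • x + (1/2 : ℝ) • y) - p₁‖ :=
          norm_add_le _ _
      _ < 2 * lam := by rw [norm_sub_rev]; linarith
  rcases eq_or_lt_of_le hle with heq | hlt
  · -- Case f x = f y
    obtain ⟨s, hs⟩ := aux_param hdim f hf hτ hfτ heq.symm
    have hs0 : s ≠ 0 := by
      intro h0; apply hxy; rw [hs, h0]; simp
    rcases hs0.lt_or_gt with hneg | hpos
    · -- s < 0 : y = y + 0 • τ lies strictly between y - τ and x = y + (-s) • τ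
      have hxo : x = y + (-s) • τ := by rw [hs]; module
      have hmem := aux_mem_openSegment y τ (r := -1) (s := 0) (t := -s)
        (by norm_num) (by linarith)
      rw [show y + (-1 : ℝ) • τ = y - τ by module, show y + (0:ℝ) • τ = y by module,
        ← hxo] at hmem
      have hab : y - τ ≠ x := by
        intro h
        rw [hxo] at h
        have : ((-1 : ℝ) - (-s)) • τ = 0 := by
          have := sub_eq_zero.2 h
          rw [show y - τ - (y + (-s) • τ) = ((-1 : ℝ) - (-s)) • τ by module] at this
          exact this
        rcases smul_eq_zero.1 this with h' | h'
        · have : s = 1 := by linarith [sub_eq_zero.1 (by linarith [h'] : (-1 : ℝ) - (-s) = 0)]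
          linarith
        · exact hτ h'
      have := aux_strict hlam hyτ.le hx₁.le hab hmem
      linarith [hy₁ ▸ this]
    · -- 0 < s : x = x + 0 • τ lies strictly between x - τ and y = x + s • τ
      have hmem := aux_mem_openSegment x τ (r := -1) (s := 0) (t := s)
        (by norm_num) hpos
      rw [show x + (-1 : ℝ) • τ = x - τ by module, show x + (0:ℝ) • τ = x by module,
        ← hs] at hmem
      have hab : x - τ ≠ y := by
        intro h
        rw [hs] at h
        have : ((-1 : ℝ) - s) • τ = 0 := by
          have := sub_eq_zero.2 h
          rw [show x - τ - (x + s • τ) = ((-1 : ℝ) - s) • τ by module] at this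
          exact this
        rcases smul_eq_zero.1 this with h' | h'
        · have : (-1 : ℝ) = s := by linarith [sub_eq_zero.1 h']
          linarith
        · exact hτ h'
      have := aux_strict hlam hxτ.le hy₁.le hab hmem
      linarith [hx₁ ▸ this]
  · -- Case f x < f y
    set c : ℝ := f p₁ with hc
    set t : ℝ := (f x - c) / (f y - c) with htdef
    have hyc : 0 < f y - c := by linarith
    have ht0 : 0 < t := by apply div_pos <;> linarith
    have ht1 : t < 1 := by rw [div_lt_one hyc]; linarith
    set r : ℝ := lam / ‖τ‖ with hrdef
    have hr2 : 1 < 2 * r := by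
      rw [hrdef, show 2 * (lam / ‖τ‖) = 2 * lam / ‖τ‖ by ring, lt_div_iff₀ hτn]
      linarith
    have hrτ : ‖r • τ‖ = lam := by
      rw [norm_smul, hrdef, Real.norm_eq_abs, abs_div, abs_of_pos hlam, abs_of_pos hτn]
      field_simp
    -- the two points of the sphere on the line through p₁ and p₂
    have hq₁ : ‖(p₁ + r • τ) - p₁‖ = lam := by simpa using hrτ
    have hq₂ : ‖(p₁ + (-r) • τ) - p₁‖ = lam := by
      rw [show (p₁ + (-r) • τ) - p₁ = -(r • τ) by module, norm_neg]; exact hrτ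
    -- points of the ball at level f x
    set z : E := (1 - t) • (p₁ + r • τ) + t • y with hzdef
    set z' : E := (1 - t) • (p₁ + (-r) • τ) + t • (y - τ) with hz'def
    have hzball : ‖z - p₁‖ ≤ lam := by
      have : z - p₁ = (1 - t) • ((p₁ + r • τ) - p₁) + t • (y - p₁) := by
        rw [hzdef]; module
      rw [this]
      calc ‖(1 - t) • ((p₁ + r • τ) - p₁) + t • (y - p₁)‖
          ≤ ‖(1 - t) • ((p₁ + r • τ) - p₁)‖ + ‖t • (y - p₁)‖ := norm_add_le _ _
        _ = (1 - t) * lam + t * lam := by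
            rw [norm_smul, norm_smul, hq₁, hy₁, Real.norm_eq_abs, Real.norm_eq_abs,
              abs_of_pos (by linarith : (0:ℝ) < 1 - t), abs_of_pos ht0]
        _ = lam := by ring
    have hz'ball : ‖z' - p₁‖ ≤ lam := by
      have : z' - p₁ = (1 - t) • ((p₁ + (-r) • τ) - p₁) + t • ((y - τ) - p₁) := by
        rw [hz'def]; module
      rw [this]
      calc ‖(1 - t) • ((p₁ + (-r) • τ) - p₁) + t • ((y - τ) - p₁)‖
          ≤ ‖(1 - t) • ((p₁ + (-r) • τ) - p₁)‖ + ‖t • ((y - τ) - p₁)‖ := norm_add_le _ _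
        _ = (1 - t) * lam + t * lam := by
            rw [norm_smul, norm_smul, hq₂, hyτ, Real.norm_eq_abs, Real.norm_eq_abs,
              abs_of_pos (by linarith : (0:ℝ) < 1 - t), abs_of_pos ht0]
        _ = lam := by ring
    set K : ℝ := (1 - t) * (2 * r) + t with hKdef
    have hK : 1 < K := by nlinarith
    have hzz' : z = z' + K • τ := by rw [hzdef, hz'def, hKdef]; module
    -- f-values
    have hfq : f (p₁ + (-r) • τ) = c := by
      rw [map_add, map_smul]; simp [hfτ, hc]
    have hfz' : f z' = f x := by
      rw [hz'def, map_add, map_smul, map_smul, hfq, map_sub, hfτ, smul_eq_mul, smul_eq_mul]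
      have : (1 - t) * c + t * (f y - 0) = c + t * (f y - c) := by ring
      rw [this, htdef, div_mul_cancel₀ _ (ne_of_gt hyc)]
      ring
    obtain ⟨α, hα⟩ := aux_param hdim f hf hτ hfτ hfz'.symm
    -- x = z' + α • τ ; x - τ = z' + (α - 1) • τ ; z = z' + K • τ ; z' = z' + 0 • τ
    have hxmτ : x - τ = z' + (α - 1) • τ := by rw [hα]; module
    rcases le_or_gt α 1 with hA | hA
    · -- α ≤ 1 < K : x is strictly between x - τ and z
      have hmem := aux_mem_openSegment z' τ (r := α - 1) (s := α) (t := K)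
        (by linarith) (by linarith)
      rw [← hxmτ, ← hα, ← hzz'] at hmem
      have hab : x - τ ≠ z := by
        intro h
        rw [hxmτ, hzz'] at h
        have h0 : ((α - 1) - K) • τ = 0 := by
          have := sub_eq_zero.2 h
          rw [show z' + (α - 1) • τ - (z' + K • τ) = ((α - 1) - K) • τ by module] at this
          exact this
        rcases smul_eq_zero.1 h0 with h' | h'
        · have := sub_eq_zero.1 h'; linarith
        · exact hτ h'
      have := aux_strict hlam hxτ.le hzball hab hmem
      linarith [hx₁ ▸ this]
    · -- 1 < α : x - τ is strictly between z' and x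
      have hmem := aux_mem_openSegment z' τ (r := 0) (s := α - 1) (t := α)
        (by linarith) (by linarith)
      rw [← hxmτ, ← hα, show z' + (0:ℝ) • τ = z' by module] at hmem
      have hab : z' ≠ x := by
        intro h
        rw [hα] at h
        have h0 : (α : ℝ) • τ = 0 := by
          have := sub_eq_zero.2 h.symm
          rw [show z' + α • τ - z' = α • τ by module] at this
          exact this
        rcases smul_eq_zero.1 h0 with h' | h'
        · linarith
        · exact hτ h'
      have := aux_strict hlam hz'ball hx₁.le hab hmem
      linarith [hxτ ▸ this]

end Aux

theorem equidistant_points_not_same_open_halfplane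
    {E : Type*} [NormedAddCommGroup E] [NormedSpace ℝ E] [StrictConvexSpace ℝ E]
    (hdim : Module.finrank ℝ E = 2)
    (p₁ p₂ : E) (hp : p₁ ≠ p₂) (lam : ℝ) (hlam : 0 < lam)
    (x y : E) (hxy : x ≠ y)
    (hx₁ : ‖x - p₁‖ = lam) (hx₂ : ‖x - p₂‖ = lam)
    (hy₁ : ‖y - p₁‖ = lam) (hy₂ : ‖y - p₂‖ = lam)
    (f : E →L[ℝ] ℝ) (hf : f ≠ 0) (hfp : f p₁ = f p₂) :
    ¬ (f p₁ < f x ∧ f p₁ < f y) := by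
  rintro ⟨hfx, hfy⟩
  rcases le_total (f x) (f y) with h | h
  · exact aux_main hdim p₁ p₂ hp lam hlam x y hxy hx₁ hx₂ hy₁ hy₂ f hf hfp hfx hfy h
  · exact aux_main hdim p₁ p₂ hp lam hlam y x (Ne.symm hxy) hy₁ hy₂ hx₁ hx₂ f hf hfp hfy hfx h
end

section
/- In a strictly convex normed plane, each triangle (set of three non-collinear points) has at most one circumcenter, i.e., at most one point equidistant from all three vertices. -/
open Set

section AuxCircum

variable {E : Type*} [NormedAddCommGroup E] [NormedSpace ℝ E] [StrictConvexSpace ℝ E]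


private lemma aux_lemP' {x y p : E} {r s : ℝ} (hxy : x ≠ y) (hrs : r ≤ s)
    (hpx : ‖p - x‖ = r) (hpy : ‖p - y‖ = s) {μ : ℝ} (hμ : μ < 0)
    (h : ‖p + μ • (y - x) - y‖ ≤ s) : False := by
  have hone : (0:ℝ) < 1 - μ := by linarith
  have hA : ‖(p + (μ - 1) • (y - x)) - x‖ ≤ s := by
    have heq : (p + (μ - 1) • (y - x)) - x = p + μ • (y - x) - y := by module
    rw [heq]; exact h
  have hB : ‖p - x‖ ≤ s := by rw [hpx]; exact hrs
  have hne : (p + (μ - 1) • (y - x)) - x ≠ p - x := by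
    intro hEq
    have h1 : p + (μ - 1) • (y - x) = p := sub_left_inj.mp hEq
    have h2 : (μ - 1) • (y - x) = 0 := by
      have := h1; rwa [add_eq_left] at this
    rcases smul_eq_zero.mp h2 with h3 | h3
    · linarith
    · exact hxy (sub_eq_zero.mp h3).symm
  have hsum : (1/(1-μ)) + (-μ/(1-μ)) = 1 := by field_simp; ring
  have hcombo := norm_combo_lt_of_ne hA hB hne (by positivity)
    (by apply div_pos <;> linarith) hsum
  have heq2 : (1/(1-μ)) • ((p + (μ - 1) • (y - x)) - x) + (-μ/(1-μ)) • (p - x) = p - y := by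
    match_scalars <;> field_simp <;> ring
  rw [heq2, hpy] at hcombo
  exact lt_irrefl s hcombo

private lemma aux_not_translate {x y p p' : E} {r s : ℝ} (hxy : x ≠ y) (hrs : r ≤ s)
    (hpx : ‖p - x‖ = r) (hpy : ‖p - y‖ = s) (hp'x : ‖p' - x‖ = r) (hp'y : ‖p' - y‖ = s)
    (hne : p ≠ p') {μ : ℝ} (hpp' : p' = p + μ • (y - x)) : False := by
  rcases lt_trichotomy μ 0 with hμ | hμ | hμ
  · exact aux_lemP' hxy hrs hpx hpy hμ (by rw [show p + μ • (y-x) - y = p' - y by rw [hpp'], hp'y])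
  · apply hne; rw [hpp', hμ]; simp
  · refine aux_lemP' hxy hrs hp'x hp'y (show -μ < 0 by linarith) ?_
    have h1 : p' + (-μ) • (y - x) - y = p - y := by rw [hpp']; module
    rw [h1, hpy]

private lemma aux_slope {D : Set ℝ} {f : ℝ → ℝ} (hf : StrictConvexOn ℝ D f)
    {u₁ v₁ u₂ v₂ : ℝ} (hu₁ : u₁ ∈ D) (hv₁ : v₁ ∈ D) (hu₂ : u₂ ∈ D) (hv₂ : v₂ ∈ D)
    (h₁ : u₁ < v₁) (h₂ : u₂ < v₂) (hu : u₁ ≤ u₂) (hv : v₁ ≤ v₂)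
    (hst : u₁ < u₂ ∨ v₁ < v₂) :
    (f v₁ - f u₁) / (v₁ - u₁) < (f v₂ - f u₂) / (v₂ - u₂) := by
  rcases eq_or_lt_of_le hv with rfl | hvlt
  · -- v₁ = v₂, need u₁ < u₂
    have huu : u₁ < u₂ := by rcases hst with h | h; exacts [h, absurd h (lt_irrefl _)]
    have key := hf.secant_strict_mono hv₁ hu₁ hu₂ (ne_of_lt h₁).symm.symm
      (ne_of_lt h₂).symm.symm huu
    -- key : (f u₁ - f v₁)/(u₁ - v₁) < (f u₂ - f v₁)/(u₂ - v₁)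
    rw [show (f v₁ - f u₁) / (v₁ - u₁) = (f u₁ - f v₁) / (u₁ - v₁) by rw [← neg_div_neg_eq]; ring_nf,
        show (f v₁ - f u₂) / (v₁ - u₂) = (f u₂ - f v₁) / (u₂ - v₁) by rw [← neg_div_neg_eq]; ring_nf]
    exact key
  · -- v₁ < v₂
    have step1 : (f v₁ - f u₁) / (v₁ - u₁) < (f v₂ - f u₁) / (v₂ - u₁) :=
      hf.secant_strict_mono hu₁ hv₁ hv₂ (ne_of_gt h₁) (ne_of_gt (lt_trans h₁ hvlt)) hvlt
    have step2 : (f v₂ - f u₁) / (v₂ - u₁) ≤ (f v₂ - f u₂) / (v₂ - u₂) := by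
      have key := hf.convexOn.secant_mono hv₂ hu₁ hu₂ (ne_of_lt (lt_of_lt_of_le h₁ hv))
        (ne_of_lt h₂) hu
      -- key : (f u₁ - f v₂)/(u₁ - v₂) ≤ (f u₂ - f v₂)/(u₂ - v₂)
      rw [show (f v₂ - f u₁) / (v₂ - u₁) = (f u₁ - f v₂) / (u₁ - v₂) by
            rw [← neg_div_neg_eq]; ring_nf,
          show (f v₂ - f u₂) / (v₂ - u₂) = (f u₂ - f v₂) / (u₂ - v₂) by
            rw [← neg_div_neg_eq]; ring_nf]
      exact key
    exact lt_of_lt_of_le step1 step2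

private def chordSet (d e : E) (h : ℝ) : Set ℝ := {τ : ℝ | ‖τ • d + h • e‖ ≤ 1}

private noncomputable def leftF (d e : E) (h : ℝ) : ℝ := sInf (chordSet d e h)

private def domF (d e : E) : Set ℝ := {h : ℝ | (chordSet d e h).Nonempty}

private lemma mem_chordSet_iff {d e : E} {h τ : ℝ} :
    τ ∈ chordSet d e h ↔ ‖τ • d + h • e‖ ≤ 1 := Iff.rfl



set_option maxHeartbeats 1000000 in
private lemma aux_core (x y : E) (hxy : x ≠ y) (r s : ℝ) (hr : 0 < r) (hrs : r ≤ s)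
    (e : E) (t c : E →ₗ[ℝ] ℝ)
    (hrepr : ∀ v : E, v = t v • (y - x) + c v • e)
    (htd : t (y - x) = 1) (hcd : c (y - x) = 0) (hce : c e = 1)
    (P Q R : E)
    (hPx : ‖P - x‖ = r) (hPy : ‖P - y‖ = s)
    (hQx : ‖Q - x‖ = r) (hQy : ‖Q - y‖ = s)
    (hRx : ‖R - x‖ = r) (hRy : ‖R - y‖ = s)
    (hPR : P ≠ R)
    (hQmid : ∀ μ : ℝ, Q ≠ P + μ • (R - P))
    (hPQ : c (P - x) < c (Q - x)) (hQR : c (Q - x) < c (R - x)) : False := by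
  have hdne : y - x ≠ 0 := sub_ne_zero.mpr (Ne.symm hxy)
  have hdnorm : (0:ℝ) < ‖y - x‖ := norm_pos_iff.mpr hdne
  have hs : 0 < s := lt_of_lt_of_le hr hrs
  have hc_coord : ∀ (τ h : ℝ), c (τ • (y - x) + h • e) = h := by
    intro τ h
    rw [map_add, map_smul, map_smul, hcd, hce, smul_eq_mul, smul_eq_mul]
    ring
  have hbdd : ∀ h, BddBelow (chordSet (y - x) e h) := by
    intro h
    refine ⟨-(1 + |h| * ‖e‖) / ‖y - x‖, fun τ hτ => ?_⟩
    have hτ' : ‖τ • (y - x) + h • e‖ ≤ 1 := hτ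
    have h1 : ‖τ • (y - x)‖ - ‖h • e‖ ≤ ‖τ • (y - x) + h • e‖ := by
      have := norm_sub_norm_le (τ • (y - x)) (-(h • e))
      simpa [sub_neg_eq_add] using this
    rw [norm_smul, norm_smul, Real.norm_eq_abs, Real.norm_eq_abs] at h1
    have h2 : |τ| * ‖y - x‖ ≤ 1 + |h| * ‖e‖ := by linarith
    rw [div_le_iff₀ hdnorm]
    nlinarith [neg_abs_le τ, abs_nonneg τ, hdnorm]
  have hclosed : ∀ h, IsClosed (chordSet (y - x) e h) := by
    intro h
    have hcont : Continuous fun τ : ℝ => ‖τ • (y - x) + h • e‖ := by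
      apply Continuous.norm
      exact (continuous_id.smul continuous_const).add continuous_const
    exact isClosed_le hcont continuous_const
  have hmemS : ∀ h ∈ domF (y - x) e, leftF (y - x) e h ∈ chordSet (y - x) e h := fun h hh => (hclosed h).csInf_mem hh (hbdd h)
  have hle : ∀ {h τ : ℝ}, τ ∈ chordSet (y - x) e h → leftF (y - x) e h ≤ τ := fun {h τ} hτ => csInf_le (hbdd h) hτ
  have hmem_of_vec : ∀ v : E, ‖v‖ ≤ 1 → t v ∈ chordSet (y - x) e (c v) := by
    intro v hv
    show ‖t v • (y - x) + c v • e‖ ≤ 1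
    rw [← hrepr v]; exact hv
  -- strict convexity of leftF (y - x) e on domF (y - x) e
  have hconv : StrictConvexOn ℝ (domF (y - x) e) (leftF (y - x) e) := by
    constructor
    · intro h₁ hh₁ h₂ hh₂ θ₁ θ₂ hθ₁ hθ₂ hsum
      obtain ⟨τ₁, hτ₁⟩ := hh₁
      obtain ⟨τ₂, hτ₂⟩ := hh₂
      refine ⟨θ₁ * τ₁ + θ₂ * τ₂, ?_⟩
      show ‖(θ₁ * τ₁ + θ₂ * τ₂) • (y - x) + (θ₁ • h₁ + θ₂ • h₂) • e‖ ≤ 1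
      have hcomb : (θ₁ * τ₁ + θ₂ * τ₂) • (y - x) + (θ₁ • h₁ + θ₂ • h₂) • e
          = θ₁ • (τ₁ • (y - x) + h₁ • e) + θ₂ • (τ₂ • (y - x) + h₂ • e) := by
        simp only [smul_eq_mul]; module
      rw [hcomb]
      calc ‖θ₁ • (τ₁ • (y - x) + h₁ • e) + θ₂ • (τ₂ • (y - x) + h₂ • e)‖
          ≤ ‖θ₁ • (τ₁ • (y - x) + h₁ • e)‖ + ‖θ₂ • (τ₂ • (y - x) + h₂ • e)‖ := norm_add_le _ _
        _ = θ₁ * ‖τ₁ • (y - x) + h₁ • e‖ + θ₂ * ‖τ₂ • (y - x) + h₂ • e‖ := by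
            rw [norm_smul, norm_smul, Real.norm_eq_abs, Real.norm_eq_abs,
              abs_of_nonneg hθ₁, abs_of_nonneg hθ₂]
        _ ≤ θ₁ * 1 + θ₂ * 1 := by
            apply add_le_add <;> apply mul_le_mul_of_nonneg_left <;> assumption
        _ = 1 := by linarith
    · intro h₁ hh₁ h₂ hh₂ hhne θ₁ θ₂ hθ₁ hθ₂ hsum
      have hu₁ : ‖leftF (y - x) e h₁ • (y - x) + h₁ • e‖ ≤ 1 := hmemS h₁ hh₁
      have hu₂ : ‖leftF (y - x) e h₂ • (y - x) + h₂ • e‖ ≤ 1 := hmemS h₂ hh₂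
      have hune : leftF (y - x) e h₁ • (y - x) + h₁ • e ≠ leftF (y - x) e h₂ • (y - x) + h₂ • e := by
        intro hEq
        apply hhne
        have := congrArg c hEq
        rwa [hc_coord, hc_coord] at this
      have hw := norm_combo_lt_of_ne hu₁ hu₂ hune hθ₁ hθ₂ hsum
      set w := θ₁ • (leftF (y - x) e h₁ • (y - x) + h₁ • e) + θ₂ • (leftF (y - x) e h₂ • (y - x) + h₂ • e) with hwdef
      set ε := (1 - ‖w‖) / ‖y - x‖ with hεdef
      have hεpos : 0 < ε := div_pos (by linarith) hdnorm
      have hmem2 : (θ₁ * leftF (y - x) e h₁ + θ₂ * leftF (y - x) e h₂ - ε) ∈ chordSet (y - x) e (θ₁ * h₁ + θ₂ * h₂) := by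
        show ‖(θ₁ * leftF (y - x) e h₁ + θ₂ * leftF (y - x) e h₂ - ε) • (y - x) + (θ₁ * h₁ + θ₂ * h₂) • e‖ ≤ 1
        have heq3 : (θ₁ * leftF (y - x) e h₁ + θ₂ * leftF (y - x) e h₂ - ε) • (y - x) + (θ₁ * h₁ + θ₂ * h₂) • e
            = w - ε • (y - x) := by rw [hwdef]; module
        rw [heq3]
        calc ‖w - ε • (y - x)‖ ≤ ‖w‖ + ‖ε • (y - x)‖ := norm_sub_le _ _
          _ = ‖w‖ + ε * ‖y - x‖ := by rw [norm_smul, Real.norm_eq_abs, abs_of_pos hεpos]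
          _ = ‖w‖ + (1 - ‖w‖) := by rw [hεdef, div_mul_cancel₀]; exact ne_of_gt hdnorm
          _ = 1 := by ring
      have hfin := hle hmem2
      have : leftF (y - x) e (θ₁ • h₁ + θ₂ • h₂) = leftF (y - x) e (θ₁ * h₁ + θ₂ * h₂) := by norm_num
      rw [this]
      have hεpos' := hεpos
      simp only [smul_eq_mul]
      linarith
  -- coordinates of p - y
  have hty : ∀ p : E, t (p - y) = t (p - x) - 1 := by
    intro p
    have h1 : p - y = (p - x) - (y - x) := by abel
    rw [h1, map_sub, htd]
  have hcy : ∀ p : E, c (p - y) = c (p - x) := by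
    intro p
    have h1 : p - y = (p - x) - (y - x) := by abel
    rw [h1, map_sub, hcd, sub_zero]
  -- memberships from the sphere points
  have hu_mem : ∀ p : E, ‖p - x‖ = r → (r⁻¹ * t (p - x)) ∈ chordSet (y - x) e (c (p - x) / r) := by
    intro p hp
    have hv1 : ‖r⁻¹ • (p - x)‖ ≤ 1 := by
      rw [norm_smul, Real.norm_eq_abs, abs_of_pos (inv_pos.mpr hr), hp,
        inv_mul_cancel₀ (ne_of_gt hr)]
    have := hmem_of_vec _ hv1
    rwa [map_smul, map_smul, smul_eq_mul, smul_eq_mul, inv_mul_eq_div] at this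
  have hv_mem : ∀ p : E, ‖p - y‖ = s → (s⁻¹ * (t (p - x) - 1)) ∈ chordSet (y - x) e (c (p - x) / s) := by
    intro p hp
    have hv1 : ‖s⁻¹ • (p - y)‖ ≤ 1 := by
      rw [norm_smul, Real.norm_eq_abs, abs_of_pos (inv_pos.mpr hs), hp,
        inv_mul_cancel₀ (ne_of_gt hs)]
    have := hmem_of_vec _ hv1
    rwa [map_smul, map_smul, smul_eq_mul, smul_eq_mul, hty, hcy, inv_mul_eq_div] at this
  have hDr : ∀ p : E, ‖p - x‖ = r → c (p - x) / r ∈ domF (y - x) e := fun p hp => ⟨_, hu_mem p hp⟩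
  have hDs : ∀ p : E, ‖p - y‖ = s → c (p - x) / s ∈ domF (y - x) e := fun p hp => ⟨_, hv_mem p hp⟩
  -- the interior point q on segment [P, R] at the height of Q
  set lam : ℝ := (c (Q - x) - c (P - x)) / (c (R - x) - c (P - x)) with hlamdef
  have hPRlt : c (P - x) < c (R - x) := lt_trans hPQ hQR
  have hlam0 : 0 < lam := div_pos (by linarith) (by linarith)
  have hlam1 : lam < 1 := (div_lt_one (by linarith)).mpr (by linarith)
  set q : E := P + lam • (R - P) with hqdef
  have hqx1 : q - x = (1 - lam) • (P - x) + lam • (R - x) := by rw [hqdef]; module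
  have hqx : ‖q - x‖ < r := by
    rw [hqx1]
    have hne : P - x ≠ R - x := fun h => hPR (sub_left_inj.mp h)
    exact norm_combo_lt_of_ne (a := 1 - lam) (b := lam) (le_of_eq hPx) (le_of_eq hRx) hne
      (by linarith) hlam0 (by ring)
  have hqy1 : q - y = (1 - lam) • (P - y) + lam • (R - y) := by rw [hqdef]; module
  have hqy : ‖q - y‖ < s := by
    rw [hqy1]
    have hne : P - y ≠ R - y := fun h => hPR (sub_left_inj.mp h)
    exact norm_combo_lt_of_ne (a := 1 - lam) (b := lam) (le_of_eq hPy) (le_of_eq hRy) hne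
      (by linarith) hlam0 (by ring)
  have hcq : c (q - x) = c (Q - x) := by
    rw [hqx1, map_add, map_smul, map_smul, smul_eq_mul, smul_eq_mul]
    have h2 : lam * (c (R - x) - c (P - x)) = c (Q - x) - c (P - x) := by
      rw [hlamdef]; exact div_mul_cancel₀ _ (by linarith)
    ring_nf
    ring_nf at h2
    linarith
  have hcqQ : c (q - Q) = 0 := by
    have h1 : q - Q = (q - x) - (Q - x) := by abel
    rw [h1, map_sub, hcq, sub_self]
  set tau : ℝ := t (q - Q) with htaudef
  have hqQ : q = Q + tau • (y - x) := by
    have h1 := hrepr (q - Q)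
    rw [hcqQ, zero_smul, add_zero] at h1
    rw [htaudef, ← h1]; abel
  have htau_ne : tau ≠ 0 := by
    intro h0
    apply hQmid lam
    rw [← hqdef, hqQ, h0, zero_smul, add_zero]
  have htau_pos : 0 < tau := by
    rcases lt_or_gt_of_ne htau_ne with hlt | hgt
    · exfalso
      refine aux_lemP' hxy hrs hQx hQy hlt ?_
      rw [← hqQ]
      exact le_of_lt hqy
    · exact hgt
  -- Q is the left endpoint of the chord of ball(x, r) through Q in direction y - x
  have claimK1 : ∀ μ : ℝ, μ < 0 → ¬ (‖Q + μ • (y - x) - x‖ ≤ r) := by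
    intro μ hμ hnorm
    set θ : ℝ := tau / (tau - μ) with hθdef
    have hden : 0 < tau - μ := by linarith
    have hθ0 : 0 < θ := div_pos htau_pos hden
    have hθ1 : θ < 1 := (div_lt_one hden).mpr (by linarith)
    have hsc : θ * μ + (1 - θ) * tau = 0 := by
      rw [hθdef]; field_simp; ring
    have hcombo : θ • (Q + μ • (y - x) - x) + (1 - θ) • (q - x)
        = (Q - x) + (θ * μ + (1 - θ) * tau) • (y - x) := by
      rw [hqQ]; module
    have hne2 : Q + μ • (y - x) - x ≠ q - x := by
      intro hEq
      rw [hqQ] at hEq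
      have h3 : (μ - tau) • (y - x) = 0 := by
        have h4 : Q + μ • (y - x) - x - (Q + tau • (y - x) - x) = (μ - tau) • (y - x) := by
          module
        rw [← h4, hEq, sub_self]
      rcases smul_eq_zero.mp h3 with h5 | h5
      · have : μ = tau := by linarith [sub_eq_zero.mp h5]
        linarith
      · exact hdne h5
    have hlt2 := norm_combo_lt_of_ne (a := θ) (b := 1 - θ) hnorm (le_of_lt hqx) hne2 hθ0
      (by linarith) (by ring)
    rw [hcombo, hsc, zero_smul, add_zero, hQx] at hlt2
    exact lt_irrefl r hlt2
  -- exact value of leftF (y - x) e at the Q heights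
  have haQr : leftF (y - x) e (c (Q - x) / r) = r⁻¹ * t (Q - x) := by
    refine le_antisymm (hle (hu_mem Q hQx)) ?_
    by_contra hlt
    push_neg at hlt
    have hwS := hmemS _ (hDr Q hQx)
    have hcalc : r * (r⁻¹ * t (Q - x)) = t (Q - x) := by field_simp
    refine claimK1 (r * leftF (y - x) e (c (Q - x) / r) - t (Q - x))
      (by nlinarith [mul_lt_mul_of_pos_left hlt hr]) ?_
    have heq : Q + (r * leftF (y - x) e (c (Q - x) / r) - t (Q - x)) • (y - x) - x
        = r • (leftF (y - x) e (c (Q - x) / r) • (y - x) + (c (Q - x) / r) • e) := by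
      have step : Q + (r * leftF (y - x) e (c (Q - x) / r) - t (Q - x)) • (y - x) - x
          = (t (Q - x) • (y - x) + c (Q - x) • e)
            + (r * leftF (y - x) e (c (Q - x) / r) - t (Q - x)) • (y - x) := by
        rw [← hrepr (Q - x)]; abel
      rw [step]
      match_scalars <;> (field_simp; try ring)
    rw [heq, norm_smul, Real.norm_eq_abs, abs_of_pos hr]
    calc r * ‖leftF (y - x) e (c (Q - x) / r) • (y - x) + (c (Q - x) / r) • e‖ ≤ r * 1 :=
          mul_le_mul_of_nonneg_left hwS (le_of_lt hr)
      _ = r := mul_one r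
  -- exact value of leftF (y - x) e at the s-heights for all three points
  have haS : ∀ p : E, ‖p - x‖ = r → ‖p - y‖ = s → leftF (y - x) e (c (p - x) / s) = s⁻¹ * (t (p - x) - 1) := by
    intro p hpx hpy
    refine le_antisymm (hle (hv_mem p hpy)) ?_
    by_contra hlt
    push_neg at hlt
    have hwS := hmemS _ (hDs p hpy)
    have hcalc : s * (s⁻¹ * (t (p - x) - 1)) = t (p - x) - 1 := by field_simp
    refine aux_lemP' hxy hrs hpx hpy
      (show s * leftF (y - x) e (c (p - x) / s) - (t (p - x) - 1) < 0 by
        nlinarith [mul_lt_mul_of_pos_left hlt hs]) ?_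
    have heq : p + (s * leftF (y - x) e (c (p - x) / s) - (t (p - x) - 1)) • (y - x) - y
        = s • (leftF (y - x) e (c (p - x) / s) • (y - x) + (c (p - x) / s) • e) := by
      have hpyrepr : p - y = (t (p - x) - 1) • (y - x) + c (p - x) • e := by
        have := hrepr (p - y)
        rwa [hty, hcy] at this
      have step : p + (s * leftF (y - x) e (c (p - x) / s) - (t (p - x) - 1)) • (y - x) - y
          = ((t (p - x) - 1) • (y - x) + c (p - x) • e)
            + (s * leftF (y - x) e (c (p - x) / s) - (t (p - x) - 1)) • (y - x) := by
        rw [← hpyrepr]; abel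
      rw [step]
      match_scalars <;> (field_simp; try ring)
    rw [heq, norm_smul, Real.norm_eq_abs, abs_of_pos hs]
    calc s * ‖leftF (y - x) e (c (p - x) / s) • (y - x) + (c (p - x) / s) • e‖ ≤ s * 1 :=
          mul_le_mul_of_nonneg_left hwS (le_of_lt hs)
      _ = s := mul_one s
  -- key equations and inequalities
  have keyQ : r * leftF (y - x) e (c (Q - x) / r) - s * leftF (y - x) e (c (Q - x) / s) = 1 := by
    rw [haQr, haS Q hQx hQy]
    field_simp
    ring
  rcases eq_or_lt_of_le hrs with hreqs | hrlts
  · -- r = s : contradiction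
    rw [← hreqs] at keyQ
    simp at keyQ
  have keyP : r * leftF (y - x) e (c (P - x) / r) - s * leftF (y - x) e (c (P - x) / s) ≤ 1 := by
    have h1 := hle (hu_mem P hPx)
    rw [haS P hPx hPy]
    have h2 : r * (r⁻¹ * t (P - x)) = t (P - x) := by field_simp
    have h3 : s * (s⁻¹ * (t (P - x) - 1)) = t (P - x) - 1 := by field_simp
    nlinarith
  have keyR : r * leftF (y - x) e (c (R - x) / r) - s * leftF (y - x) e (c (R - x) / s) ≤ 1 := by
    have h1 := hle (hu_mem R hRx)
    rw [haS R hRx hRy]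
    have h2 : r * (r⁻¹ * t (R - x)) = t (R - x) := by field_simp
    have h3 : s * (s⁻¹ * (t (R - x) - 1)) = t (R - x) - 1 := by field_simp
    nlinarith
  -- final unimodality contradiction
  rcases le_or_gt 0 (c (Q - x)) with hcQ0 | hcQ0
  · -- use Q and R on the increasing side
    have hcR0 : 0 < c (R - x) := lt_of_le_of_lt hcQ0 hQR
    have h₁ : c (Q - x) / s < c (R - x) / s := by
      apply div_lt_div_of_pos_right hQR hs
    have h₂ : c (Q - x) / r < c (R - x) / r := by
      apply div_lt_div_of_pos_right hQR hr
    have hu : c (Q - x) / s ≤ c (Q - x) / r := div_le_div_of_nonneg_left hcQ0 hr hrs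
    have hv : c (R - x) / s < c (R - x) / r := div_lt_div_of_pos_left hcR0 hr hrlts
    have hsl := aux_slope hconv (hDs Q hQy) (hDs R hRy) (hDr Q hQx) (hDr R hRx)
      h₁ h₂ hu (le_of_lt hv) (Or.inr hv)
    rw [div_lt_div_iff₀ (by linarith) (by linarith)] at hsl
    rw [← sub_div, ← sub_div, ← mul_div_assoc, ← mul_div_assoc,
      div_lt_div_iff₀ hr hs] at hsl
    have hΔ : 0 < c (R - x) - c (Q - x) := by linarith
    have h4 : r * (leftF (y - x) e (c (R - x) / r) - leftF (y - x) e (c (Q - x) / r))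
        ≤ s * (leftF (y - x) e (c (R - x) / s) - leftF (y - x) e (c (Q - x) / s)) := by linarith
    nlinarith [mul_le_mul_of_nonneg_right h4 (le_of_lt hΔ)]
  · -- use P and Q on the decreasing side
    have hcP0 : c (P - x) < 0 := lt_trans hPQ hcQ0
    have h₁ : c (P - x) / r < c (Q - x) / r := by
      apply div_lt_div_of_pos_right hPQ hr
    have h₂ : c (P - x) / s < c (Q - x) / s := by
      apply div_lt_div_of_pos_right hPQ hs
    have hu : c (P - x) / r ≤ c (P - x) / s := by
      have := div_lt_div_of_pos_left (show (0:ℝ) < -c (P - x) by linarith) hr hrlts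
      rw [neg_div, neg_div] at this
      linarith
    have hv : c (Q - x) / r < c (Q - x) / s := by
      have := div_lt_div_of_pos_left (show (0:ℝ) < -c (Q - x) by linarith) hr hrlts
      rw [neg_div, neg_div] at this
      linarith
    have hsl := aux_slope hconv (hDr P hPx) (hDr Q hQx) (hDs P hPy) (hDs Q hQy)
      h₁ h₂ hu (le_of_lt hv) (Or.inr hv)
    rw [div_lt_div_iff₀ (by linarith) (by linarith)] at hsl
    rw [← sub_div, ← sub_div, ← mul_div_assoc, ← mul_div_assoc,
      div_lt_div_iff₀ hs hr] at hsl
    have hΔ : 0 < c (Q - x) - c (P - x) := by linarith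
    have h4 : s * (leftF (y - x) e (c (Q - x) / s) - leftF (y - x) e (c (P - x) / s))
        ≤ r * (leftF (y - x) e (c (Q - x) / r) - leftF (y - x) e (c (P - x) / r)) := by linarith
    nlinarith [mul_le_mul_of_nonneg_right h4 (le_of_lt hΔ)]

set_option maxHeartbeats 1000000 in
private lemma aux_main_s3 {E : Type*} [NormedAddCommGroup E] [NormedSpace ℝ E]
    [StrictConvexSpace ℝ E]
    (hdim : Module.finrank ℝ E = 2)
    (p₁ p₂ p₃ : E) (hcol : ¬ Collinear ℝ ({p₁, p₂, p₃} : Set E))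
    (x y : E)
    (hx : ‖x - p₁‖ = ‖x - p₂‖ ∧ ‖x - p₂‖ = ‖x - p₃‖)
    (hy : ‖y - p₁‖ = ‖y - p₂‖ ∧ ‖y - p₂‖ = ‖y - p₃‖)
    (hrs : ‖x - p₁‖ ≤ ‖y - p₁‖) : x = y := by
  by_contra hxy
  have hne12 : p₁ ≠ p₂ := by
    rintro rfl
    refine hcol ?_
    have hset : ({p₁, p₁, p₃} : Set E) = {p₁, p₃} := by
      ext z; simp only [Set.mem_insert_iff, Set.mem_singleton_iff]; tauto
    rw [hset]; exact collinear_pair ℝ p₁ p₃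
  have hne13 : p₁ ≠ p₃ := by
    rintro rfl
    refine hcol ?_
    have hset : ({p₁, p₂, p₁} : Set E) = {p₁, p₂} := by
      ext z; simp only [Set.mem_insert_iff, Set.mem_singleton_iff]; tauto
    rw [hset]; exact collinear_pair ℝ p₁ p₂
  have hne23 : p₂ ≠ p₃ := by
    rintro rfl
    refine hcol ?_
    have hset : ({p₁, p₂, p₂} : Set E) = {p₁, p₂} := by
      ext z; simp only [Set.mem_insert_iff, Set.mem_singleton_iff]; tauto
    rw [hset]; exact collinear_pair ℝ p₁ p₂
  set r := ‖x - p₁‖ with hrdef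
  set s := ‖y - p₁‖ with hsdef
  have hp1x : ‖p₁ - x‖ = r := norm_sub_rev p₁ x
  have hp2x : ‖p₂ - x‖ = r := by rw [norm_sub_rev]; exact hx.1.symm
  have hp3x : ‖p₃ - x‖ = r := by rw [norm_sub_rev]; exact (hx.1.trans hx.2).symm
  have hp1y : ‖p₁ - y‖ = s := norm_sub_rev p₁ y
  have hp2y : ‖p₂ - y‖ = s := by rw [norm_sub_rev]; exact hy.1.symm
  have hp3y : ‖p₃ - y‖ = s := by rw [norm_sub_rev]; exact (hy.1.trans hy.2).symm
  have hr : 0 < r := by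
    rcases eq_or_lt_of_le (norm_nonneg (p₁ - x)) with h0 | h0
    · exfalso
      apply hne12
      have h1 : p₁ - x = 0 := norm_eq_zero.mp h0.symm
      have h2 : p₂ - x = 0 := norm_eq_zero.mp (by rw [hp2x, ← hp1x]; exact h0.symm)
      rw [sub_eq_zero.mp h1]
      exact (sub_eq_zero.mp h2).symm
    · rwa [hp1x] at h0
  have hdne : y - x ≠ 0 := sub_ne_zero.mpr (Ne.symm hxy)
  have hspan : Submodule.span ℝ ({y - x} : Set E) < ⊤ := by
    rw [lt_top_iff_ne_top]
    intro htop
    have h1 : Module.finrank ℝ (Submodule.span ℝ ({y - x} : Set E)) = 1 :=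
      finrank_span_singleton hdne
    rw [htop] at h1
    rw [finrank_top, hdim] at h1
    norm_num at h1
  obtain ⟨e, -, he⟩ := SetLike.exists_of_lt hspan
  have hli : LinearIndependent ℝ ![y - x, e] := by
    rw [LinearIndependent.pair_iff' hdne]
    intro a ha
    exact he (ha ▸ Submodule.smul_mem _ a (Submodule.mem_span_singleton_self _))
  have hcard : Fintype.card (Fin 2) = Module.finrank ℝ E := by simp [hdim]
  set B : Module.Basis (Fin 2) ℝ E := basisOfLinearIndependentOfCardEqFinrank hli hcard with hBdef
  have hB : ∀ i, B i = ![y - x, e] i := fun i => by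
    rw [hBdef, coe_basisOfLinearIndependentOfCardEqFinrank]
  have hB0 : B 0 = y - x := hB 0
  have hB1 : B 1 = e := hB 1
  set t : E →ₗ[ℝ] ℝ := B.coord 0 with htdef
  set c : E →ₗ[ℝ] ℝ := B.coord 1 with hcdef
  have hrepr : ∀ v : E, v = t v • (y - x) + c v • e := by
    intro v
    have h1 := B.sum_repr v
    rw [Fin.sum_univ_two, hB0, hB1] at h1
    rw [htdef, hcdef, Module.Basis.coord_apply, Module.Basis.coord_apply]
    exact h1.symm
  have htd : t (y - x) = 1 := by
    rw [htdef, Module.Basis.coord_apply, ← hB0, B.repr_self]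
    simp
  have hcd : c (y - x) = 0 := by
    rw [hcdef, Module.Basis.coord_apply, ← hB0, B.repr_self]
    simp
  have hce : c e = 1 := by
    rw [hcdef, Module.Basis.coord_apply, ← hB1, B.repr_self]
    simp
  have hcol3 : ∀ A B' C : E, ({A, B', C} : Set E) = {p₁, p₂, p₃} →
      ∀ μ : ℝ, B' ≠ A + μ • (C - A) := by
    intro A B' C hset μ hEq
    apply hcol
    rw [← hset]
    apply (collinear_iff_of_mem (Set.mem_insert A {B', C})).mpr
    refine ⟨C - A, fun p hp => ?_⟩
    simp only [Set.mem_insert_iff, Set.mem_singleton_iff] at hp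
    rcases hp with rfl | rfl | rfl
    · exact ⟨0, by simp⟩
    · exact ⟨μ, by rw [hEq, vadd_eq_add]; abel⟩
    · exact ⟨1, by rw [vadd_eq_add, one_smul]; abel⟩
  have hdiffc : ∀ u v : E, ‖u - x‖ = r → ‖u - y‖ = s → ‖v - x‖ = r → ‖v - y‖ = s → u ≠ v →
      c (u - x) = c (v - x) → False := by
    intro u v hux huy hvx hvy huv hEq
    have h3 : c (v - u) = 0 := by
      have h4 : v - u = (v - x) - (u - x) := by abel
      rw [h4, map_sub, ← hEq, sub_self]
    have h1 : v - u = t (v - u) • (y - x) := by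
      have h2 := hrepr (v - u)
      rwa [h3, zero_smul, add_zero] at h2
    exact aux_not_translate hxy hrs hux huy hvx hvy huv (μ := t (v - u))
      (by rw [← h1]; abel)
  have key : ∀ A B' C : E, ‖A - x‖ = r → ‖A - y‖ = s → ‖B' - x‖ = r → ‖B' - y‖ = s →
      ‖C - x‖ = r → ‖C - y‖ = s → A ≠ C → (∀ μ : ℝ, B' ≠ A + μ • (C - A)) →
      c (A - x) < c (B' - x) → c (B' - x) < c (C - x) → False :=
    fun A B' C h1 h2 h3 h4 h5 h6 h7 h8 h9 h10 =>
      aux_core x y hxy r s hr hrs e t c hrepr htd hcd hce A B' C h1 h2 h3 h4 h5 h6 h7 h8 h9 h10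
  have hs12 : ({p₁, p₂, p₃} : Set E) = {p₁, p₂, p₃} := rfl
  have hs132 : ({p₁, p₃, p₂} : Set E) = {p₁, p₂, p₃} := by
    ext z; simp only [Set.mem_insert_iff, Set.mem_singleton_iff]; tauto
  have hs312 : ({p₃, p₁, p₂} : Set E) = {p₁, p₂, p₃} := by
    ext z; simp only [Set.mem_insert_iff, Set.mem_singleton_iff]; tauto
  have hs213 : ({p₂, p₁, p₃} : Set E) = {p₁, p₂, p₃} := by
    ext z; simp only [Set.mem_insert_iff, Set.mem_singleton_iff]; tauto
  have hs231 : ({p₂, p₃, p₁} : Set E) = {p₁, p₂, p₃} := by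
    ext z; simp only [Set.mem_insert_iff, Set.mem_singleton_iff]; tauto
  have hs321 : ({p₃, p₂, p₁} : Set E) = {p₁, p₂, p₃} := by
    ext z; simp only [Set.mem_insert_iff, Set.mem_singleton_iff]; tauto
  rcases lt_trichotomy (c (p₁ - x)) (c (p₂ - x)) with h12 | h12 | h12
  · rcases lt_trichotomy (c (p₂ - x)) (c (p₃ - x)) with h23 | h23 | h23
    · exact key p₁ p₂ p₃ hp1x hp1y hp2x hp2y hp3x hp3y hne13 (hcol3 p₁ p₂ p₃ hs12) h12 h23
    · exact hdiffc p₂ p₃ hp2x hp2y hp3x hp3y hne23 h23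
    · rcases lt_trichotomy (c (p₁ - x)) (c (p₃ - x)) with h13 | h13 | h13
      · exact key p₁ p₃ p₂ hp1x hp1y hp3x hp3y hp2x hp2y hne12 (hcol3 p₁ p₃ p₂ hs132) h13 h23
      · exact hdiffc p₁ p₃ hp1x hp1y hp3x hp3y hne13 h13
      · exact key p₃ p₁ p₂ hp3x hp3y hp1x hp1y hp2x hp2y hne23.symm (hcol3 p₃ p₁ p₂ hs312)
          h13 h12
  · exact hdiffc p₁ p₂ hp1x hp1y hp2x hp2y hne12 h12
  · rcases lt_trichotomy (c (p₁ - x)) (c (p₃ - x)) with h13 | h13 | h13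
    · exact key p₂ p₁ p₃ hp2x hp2y hp1x hp1y hp3x hp3y hne23 (hcol3 p₂ p₁ p₃ hs213) h12 h13
    · exact hdiffc p₁ p₃ hp1x hp1y hp3x hp3y hne13 h13
    · rcases lt_trichotomy (c (p₂ - x)) (c (p₃ - x)) with h23 | h23 | h23
      · exact key p₂ p₃ p₁ hp2x hp2y hp3x hp3y hp1x hp1y hne12.symm (hcol3 p₂ p₃ p₁ hs231)
          h23 h13
      · exact hdiffc p₂ p₃ hp2x hp2y hp3x hp3y hne23 h23
      · exact key p₃ p₂ p₁ hp3x hp3y hp2x hp2y hp1x hp1y hne13.symm (hcol3 p₃ p₂ p₁ hs321)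
          h23 h12

end AuxCircum

theorem circumcenter_unique_of_strictConvex
    {E : Type*} [NormedAddCommGroup E] [NormedSpace ℝ E] [StrictConvexSpace ℝ E]
    (hdim : Module.finrank ℝ E = 2)
    (p₁ p₂ p₃ : E) (hcol : ¬ Collinear ℝ ({p₁, p₂, p₃} : Set E))
    (x y : E)
    (hx : ‖x - p₁‖ = ‖x - p₂‖ ∧ ‖x - p₂‖ = ‖x - p₃‖)
    (hy : ‖y - p₁‖ = ‖y - p₂‖ ∧ ‖y - p₂‖ = ‖y - p₃‖) :
    x = y := by
  rcases le_total ‖x - p₁‖ ‖y - p₁‖ with h | h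
  · exact aux_main_s3 hdim p₁ p₂ p₃ hcol x y hx hy h
  · exact (aux_main_s3 hdim p₁ p₂ p₃ hcol y x hy hx h).symm
end

section
/- Let P be a finite set of at least two points in a strictly convex normed plane, and let B(x̄, λ̄) be the minimal enclosing disk of P. Then at least two points of P lie on the boundary sphere S(x̄, λ̄). -/
theorem two_points_on_boundary_of_minimal_enclosing_disk
    {E : Type*} [NormedAddCommGroup E] [NormedSpace ℝ E] [StrictConvexSpace ℝ E]
    (hdim : Module.finrank ℝ E = 2)
    (P : Set E) (hPfin : P.Finite) (hcard : 2 ≤ P.ncard)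
    (xbar : E) (lambar : ℝ)
    (hsub : P ⊆ Metric.closedBall xbar lambar)
    (hmin : ∀ x : E, ∀ lam : ℝ, P ⊆ Metric.closedBall x lam → lambar ≤ lam) :
    ∃ p ∈ P, ∃ q ∈ P, p ≠ q ∧ ‖p - xbar‖ = lambar ∧ ‖q - xbar‖ = lambar := by
  by_contra hcon
  push_neg at hcon
  have hdist : ∀ q ∈ P, ‖q - xbar‖ ≤ lambar := by
    intro q hq
    have := hsub hq
    rw [Metric.mem_closedBall, dist_eq_norm] at this
    exact this
  by_cases hbd : ∃ p ∈ P, ‖p - xbar‖ = lambar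
  · obtain ⟨p, hp, hpb⟩ := hbd
    -- all other points are strictly inside
    have hPne : (P \ {p}).Nonempty := by
      by_contra hne
      rw [Set.not_nonempty_iff_eq_empty, Set.diff_eq_empty] at hne
      have : P.ncard ≤ 1 := le_trans (Set.ncard_le_ncard hne (Set.finite_singleton p))
        (by simp)
      omega
    obtain ⟨a, ha, hamax⟩ := Set.exists_max_image (P \ {p}) (fun q => ‖q - xbar‖)
      hPfin.diff hPne
    set m := ‖a - xbar‖ with hm
    have hm0 : 0 ≤ m := norm_nonneg _
    have hmlt : m < lambar := by
      rcases ha with ⟨haP, hap⟩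
      have hne : p ≠ a := fun h => hap (by simp [← h])
      exact lt_of_le_of_ne (hdist a haP) (hcon p hp a haP hne hpb)
    have hl0 : 0 < lambar := lt_of_le_of_lt hm0 hmlt
    set t : ℝ := (lambar - m) / (2 * lambar) with ht
    have ht0 : 0 < t := div_pos (by linarith) (by linarith)
    have htl : t * lambar = (lambar - m) / 2 := by
      field_simp [ht]
      rw [ht, div_mul_eq_mul_div, div_mul_eq_mul_div, div_eq_iff (mul_pos two_pos hl0).ne']; ring
    have ht1 : t ≤ 1 := by
      rw [div_le_one (by linarith)]; linarith
    set x' : E := xbar + t • (p - xbar) with hx'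
    set lam' : ℝ := (1 - t) * lambar with hlam'
    have hsub' : P ⊆ Metric.closedBall x' lam' := by
      intro q hq
      rw [Metric.mem_closedBall, dist_eq_norm]
      by_cases hqp : q = p
      · subst hqp
        have : q - x' = (1 - t) • (q - xbar) := by
          rw [hx']; module
        rw [this, norm_smul, Real.norm_eq_abs, abs_of_nonneg (by linarith), hpb]
      · have h1 : ‖q - xbar‖ ≤ m := hamax q ⟨hq, hqp⟩
        have h2 : ‖xbar - x'‖ = t * lambar := by
          have : xbar - x' = (-t) • (p - xbar) := by rw [hx']; module
          rw [this, norm_smul, Real.norm_eq_abs, abs_neg, abs_of_nonneg ht0.le, hpb]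
        calc ‖q - x'‖ ≤ ‖q - xbar‖ + ‖xbar - x'‖ := by
              have : q - x' = (q - xbar) + (xbar - x') := by abel
              rw [this]; exact norm_add_le _ _
          _ ≤ m + t * lambar := by linarith
          _ ≤ lam' := by rw [hlam']; nlinarith [htl]
    have := hmin x' lam' hsub'
    rw [hlam'] at this
    nlinarith
  · push_neg at hbd
    have hPne : P.Nonempty := by
      rw [← Set.ncard_pos hPfin]; omega
    obtain ⟨a, ha, hamax⟩ := Set.exists_max_image P (fun q => ‖q - xbar‖) hPfin hPne
    have hsub' : P ⊆ Metric.closedBall xbar ‖a - xbar‖ := by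
      intro q hq
      rw [Metric.mem_closedBall, dist_eq_norm]
      exact hamax q hq
    have h1 := hmin xbar _ hsub'
    have h2 := hdist a ha
    exact hbd a ha (le_antisymm h2 h1)
end

section
/- Let P be a finite set with at least two points in a strictly convex normed plane and B(x̄, λ̄) its minimal enclosing disk. Then every closed half-plane whose boundary line passes through x̄ contains a point of P lying on the boundary circle S(x̄, λ̄). -/
open Metric Finset

section aux
variable {E : Type*} [NormedAddCommGroup E] [NormedSpace ℝ E]

private lemma lemA_aux
    {a a' : E} {lam α β : ℝ} (hle : α ≤ β) (hβ1 : 1 ≤ β)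
    (ha : ‖a‖ = lam) (hx : ‖α • a + β • a'‖ = lam)
    (hd : β - α ≤ 1) :
    ‖α • a + β • a' - (a + a')‖ ≤ lam := by
  have hβpos : 0 < β := by linarith
  have hid : α • a + β • a' - (a + a') =
      (1/β) • ((α - β) • a) + (1 - 1/β) • (α • a + β • a') := by
    match_scalars <;> (field_simp; try ring)
  rw [hid]
  have h1 : ‖(1/β) • ((α - β) • a)‖ = (1/β) * ((β - α) * lam) := by
    rw [norm_smul, norm_smul, ha, Real.norm_eq_abs, Real.norm_eq_abs,
      abs_of_nonneg (by positivity), abs_of_nonpos (by linarith)]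
    ring
  have h2 : ‖(1 - 1/β) • (α • a + β • a')‖ = (1 - 1/β) * lam := by
    rw [norm_smul, hx, Real.norm_eq_abs, abs_of_nonneg]
    have : 1/β ≤ 1 := by rw [div_le_one hβpos]; linarith
    linarith
  have hlam0 : 0 ≤ lam := ha ▸ norm_nonneg a
  calc ‖(1/β) • ((α - β) • a) + (1 - 1/β) • (α • a + β • a')‖
      ≤ ‖(1/β) • ((α - β) • a)‖ + ‖(1 - 1/β) • (α • a + β • a')‖ := norm_add_le _ _
    _ = (1/β) * ((β - α) * lam) + (1 - 1/β) * lam := by rw [h1, h2]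
    _ ≤ (1/β) * (1 * lam) + (1 - 1/β) * lam := by
        have h1β : (0:ℝ) ≤ 1/β := by positivity
        have := mul_le_mul_of_nonneg_right hd hlam0
        nlinarith
    _ = lam := by field_simp; ring

/-- Key lemma (any normed space): if `a`, `a'` and a nonnegative combination
`α • a + β • a'` all have norm `lam`, then subtracting `a + a'` from the
combination keeps the norm at most `lam`. -/
private lemma lemA
    {a a' : E} {lam α β : ℝ} (hα : 0 ≤ α) (hβ : 0 ≤ β)
    (ha : ‖a‖ = lam) (ha' : ‖a'‖ = lam) (hx : ‖α • a + β • a'‖ = lam) :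
    ‖α • a + β • a' - (a + a')‖ ≤ lam := by
  have hlam0 : 0 ≤ lam := ha ▸ norm_nonneg a
  rcases hlam0.eq_or_lt with h0 | hlam
  · have ha0 : a = 0 := by rwa [← h0, norm_eq_zero] at ha
    have ha'0 : a' = 0 := by rwa [← h0, norm_eq_zero] at ha'
    simp [ha0, ha'0, ← h0]
  have hsum : 1 ≤ α + β := by
    have h := norm_add_le (α • a) (β • a')
    rw [hx, norm_smul, norm_smul, ha, ha', Real.norm_eq_abs, Real.norm_eq_abs,
      abs_of_nonneg hα, abs_of_nonneg hβ] at h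
    nlinarith
  have hdiff : |α - β| ≤ 1 := by
    have h := abs_norm_sub_norm_le (α • a) (-(β • a'))
    rw [sub_neg_eq_add, hx, norm_neg, norm_smul, norm_smul, ha, ha',
      Real.norm_eq_abs, Real.norm_eq_abs, abs_of_nonneg hα, abs_of_nonneg hβ] at h
    have : |α - β| * lam = |α * lam - β * lam| := by
      rw [← sub_mul, abs_mul, abs_of_nonneg hlam0]
    nlinarith [abs_nonneg (α - β)]
  rcases le_total α β with hle | hle
  · rcases le_total β 1 with hβ1 | hβ1
    · have hid : α • a + β • a' - (a + a') = -((1-α) • a + (1-β) • a') := by module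
      rw [hid, norm_neg]
      calc ‖(1-α) • a + (1-β) • a'‖ ≤ ‖(1-α) • a‖ + ‖(1-β) • a'‖ := norm_add_le _ _
        _ = (1-α) * lam + (1-β) * lam := by
            rw [norm_smul, norm_smul, ha, ha', Real.norm_eq_abs, Real.norm_eq_abs,
              abs_of_nonneg (by linarith), abs_of_nonneg (by linarith)]
        _ ≤ lam := by nlinarith
    · exact lemA_aux hle hβ1 ha hx (by cases abs_le.mp hdiff; linarith)
  · rcases le_total α 1 with hα1 | hα1
    · have hid : α • a + β • a' - (a + a') = -((1-α) • a + (1-β) • a') := by module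
      rw [hid, norm_neg]
      calc ‖(1-α) • a + (1-β) • a'‖ ≤ ‖(1-α) • a‖ + ‖(1-β) • a'‖ := norm_add_le _ _
        _ = (1-α) * lam + (1-β) * lam := by
            rw [norm_smul, norm_smul, ha, ha', Real.norm_eq_abs, Real.norm_eq_abs,
              abs_of_nonneg (by linarith), abs_of_nonneg (by linarith)]
        _ ≤ lam := by nlinarith
    · have h := lemA_aux hle hα1 ha'
        (show ‖β • a' + α • a‖ = lam by rwa [add_comm])
        (by cases abs_le.mp hdiff; linarith)
      have hid : α • a + β • a' - (a + a') = β • a' + α • a - (a' + a) := by module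
      rwa [hid]

end aux

set_option maxHeartbeats 1600000 in
theorem semicircle_contains_point_of_minimal_enclosing_disk
    {E : Type*} [NormedAddCommGroup E] [NormedSpace ℝ E] [StrictConvexSpace ℝ E]
    (hdim : Module.finrank ℝ E = 2)
    (P : Set E) (hPfin : P.Finite) (hcard : 2 ≤ P.ncard)
    (xbar : E) (lambar : ℝ)
    (hsub : P ⊆ Metric.closedBall xbar lambar)
    (hmin : ∀ x : E, ∀ lam : ℝ, P ⊆ Metric.closedBall x lam → lambar ≤ lam)
    (f : E →L[ℝ] ℝ) (hf : f ≠ 0) :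
    ∃ p ∈ P, ‖p - xbar‖ = lambar ∧ f xbar ≤ f p := by
  classical
  by_contra hcon
  push_neg at hcon
  -- basic setup
  have hnorm_le : ∀ p ∈ P, ‖p - xbar‖ ≤ lambar := by
    intro p hp
    have := hsub hp
    rwa [Metric.mem_closedBall, dist_eq_norm] at this
  obtain ⟨p₀, hp₀, q₀, hq₀, hpq⟩ : ∃ a ∈ P, ∃ b ∈ P, a ≠ b :=
    (Set.one_lt_ncard hPfin).mp (by omega)
  have hlam_pos : 0 < lambar := by
    have h1 := hnorm_le p₀ hp₀
    have h2 := hnorm_le q₀ hq₀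
    have h3 : 0 < ‖p₀ - q₀‖ := by
      rw [norm_pos_iff, sub_ne_zero]; exact hpq
    have h4 : ‖p₀ - q₀‖ ≤ ‖p₀ - xbar‖ + ‖q₀ - xbar‖ := by
      have := norm_sub_le (p₀ - xbar) (q₀ - xbar)
      simpa using this
    linarith
  set S : Finset E := hPfin.toFinset with hS
  have hSP : ∀ {p : E}, p ∈ S ↔ p ∈ P := fun {p} => hPfin.mem_toFinset
  have hS_ne : S.Nonempty := ⟨p₀, hSP.mpr hp₀⟩
  set C : Finset E := S.filter (fun p => ‖p - xbar‖ = lambar) with hC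
  -- a generic way to reach the contradiction: a better center
  have contra : ∀ y : E, (∀ p ∈ S, ‖p - y‖ < lambar) → False := by
    intro y hy
    set lam' := S.sup' hS_ne (fun p => ‖p - y‖) with hlam'
    have hlt : lam' < lambar := by
      rw [hlam', Finset.sup'_lt_iff]
      exact hy
    have hsub' : P ⊆ Metric.closedBall y lam' := by
      intro q hq
      rw [Metric.mem_closedBall, dist_eq_norm]
      exact Finset.le_sup' (fun p => ‖p - y‖) (hSP.mpr hq)
    have := hmin y lam' hsub'
    linarith
  rcases C.eq_empty_or_nonempty with hCe | hCne
  · -- no contact points at all: center xbar itself already works strictly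
    refine contra xbar (fun p hp => ?_)
    refine lt_of_le_of_ne (hnorm_le p (hSP.mp hp)) (fun heq => ?_)
    have : p ∈ C := Finset.mem_filter.mpr ⟨hp, heq⟩
    rw [hCe] at this
    exact absurd this (Finset.notMem_empty p)
  -- contact points exist
  have hCprop : ∀ p ∈ C, p ∈ P ∧ ‖p - xbar‖ = lambar := by
    intro p hp
    obtain ⟨h1, h2⟩ := Finset.mem_filter.mp hp
    exact ⟨hSP.mp h1, h2⟩
  have hflt : ∀ p ∈ C, f p < f xbar := by
    intro p hp
    obtain ⟨h1, h2⟩ := hCprop p hp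
    exact hcon p h1 h2
  have hspos : ∀ p ∈ C, 0 < f xbar - f p := fun p hp => by linarith [hflt p hp]
  -- normalized contact vectors on the affine line {f = -1}
  set b : E → E := fun q => (f xbar - f q)⁻¹ • (q - xbar) with hbdef
  have hfb : ∀ p ∈ C, f (b p) = -1 := by
    intro p hp
    have hs := hspos p hp
    rw [hbdef]
    simp only [map_smul, map_sub, smul_eq_mul]
    field_simp
    ring
  have hsb : ∀ p ∈ C, p - xbar = (f xbar - f p) • b p := by
    intro p hp
    rw [hbdef]
    simp only
    rw [smul_inv_smul₀ (ne_of_gt (hspos p hp))]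
  -- the kernel of f is one-dimensional
  have : FiniteDimensional ℝ E := FiniteDimensional.of_finrank_eq_succ (n := 1) hdim
  obtain ⟨v, hv⟩ : ∃ v : E, f v ≠ 0 := by
    by_contra h
    push_neg at h
    exact hf (by ext x; simpa using h x)
  have hranktop : LinearMap.range (f : E →ₗ[ℝ] ℝ) = ⊤ := by
    rw [LinearMap.range_eq_top]
    intro r
    exact ⟨(r / f v) • v, by simp [div_mul_cancel₀ _ hv]⟩
  have hker1 : Module.finrank ℝ (LinearMap.ker (f : E →ₗ[ℝ] ℝ)) = 1 := by
    have h := LinearMap.finrank_range_add_finrank_ker (f : E →ₗ[ℝ] ℝ)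
    rw [hranktop, finrank_top, hdim] at h
    simp [Module.finrank_self] at h
    omega
  obtain ⟨e₀, he₀ne, hspan⟩ := finrank_eq_one_iff'.mp hker1
  set e : E := (e₀ : E) with hedef
  have he : e ≠ 0 := by
    intro h
    rw [hedef] at h
    exact he₀ne (Subtype.ext h)
  have hkerE : ∀ w : E, f w = 0 → ∃ t : ℝ, w = t • e := by
    intro w hw
    obtain ⟨c, hc⟩ := hspan ⟨w, LinearMap.mem_ker.mpr hw⟩
    exact ⟨c, by simpa using congrArg Subtype.val hc.symm⟩
  -- a functional positive on e, to order the line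
  obtain ⟨g, hg1, hge⟩ := exists_dual_vector ℝ e (norm_ne_zero_iff.mpr he)
  have hge_pos : 0 < g e := by
    have hge' : g e = ‖e‖ := by exact_mod_cast hge
    rw [hge']
    exact norm_pos_iff.mpr he
  -- extreme contact points
  obtain ⟨pm, hpmC, hpm_min⟩ := C.exists_min_image (fun q => g (b q)) hCne
  obtain ⟨pM, hpMC, hpM_max⟩ := C.exists_max_image (fun q => g (b q)) hCne
  -- every contact vector is a nonnegative combination of the two extreme ones
  have hcomb : ∀ p ∈ C, ∃ α β : ℝ, 0 ≤ α ∧ 0 ≤ β ∧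
      p - xbar = α • (pm - xbar) + β • (pM - xbar) := by
    intro p hp
    obtain ⟨t₁, ht₁⟩ : ∃ t : ℝ, b p - b pm = t • e := by
      refine hkerE _ ?_
      rw [map_sub, hfb p hp, hfb pm hpmC]; ring
    obtain ⟨t₂, ht₂⟩ : ∃ t : ℝ, b pM - b p = t • e := by
      refine hkerE _ ?_
      rw [map_sub, hfb pM hpMC, hfb p hp]; ring
    have hgt₁ : g (b p) - g (b pm) = t₁ * g e := by
      rw [← map_sub, ht₁, map_smul, smul_eq_mul]
    have hgt₂ : g (b pM) - g (b p) = t₂ * g e := by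
      rw [← map_sub, ht₂, map_smul, smul_eq_mul]
    have ht₁0 : 0 ≤ t₁ := by
      have h := hpm_min p hp
      have h0 : 0 * g e ≤ t₁ * g e := by rw [zero_mul]; linarith
      exact le_of_mul_le_mul_right h0 hge_pos
    have ht₂0 : 0 ≤ t₂ := by
      have h := hpM_max p hp
      have h0 : 0 * g e ≤ t₂ * g e := by rw [zero_mul]; linarith
      exact le_of_mul_le_mul_right h0 hge_pos
    have hbp : b p = b pm + t₁ • e := by
      rw [← ht₁]; abel
    have hbM : b pM = b pm + (t₁ + t₂) • e := by
      have : b pM - b pm = (t₁ + t₂) • e := by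
        rw [add_smul, ← ht₁, ← ht₂]; abel
      rw [← this]; abel
    rcases eq_or_lt_of_le (by linarith : (0:ℝ) ≤ t₁ + t₂) with hT | hT
    · -- degenerate: b p = b pm
      have ht₁z : t₁ = 0 := by linarith
      refine ⟨(f xbar - f p) * (f xbar - f pm)⁻¹, 0, ?_, le_refl 0, ?_⟩
      · have h1 := hspos p hp
        have h2 := hspos pm hpmC
        positivity
      · rw [hsb p hp, hbp, ht₁z]
        simp only [hbdef]
        match_scalars <;> ring
    · have hTne : t₁ + t₂ ≠ 0 := ne_of_gt hT
      have hm0 : f xbar - f pm ≠ 0 := ne_of_gt (hspos pm hpmC)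
      have hbcomb : b p = (t₂/(t₁+t₂)) • b pm + (t₁/(t₁+t₂)) • b pM := by
        rw [hbp, hbM]
        match_scalars <;> (field_simp; try ring)
      have ht₁T : 0 ≤ t₁/(t₁+t₂) := by positivity
      have ht₂T : 0 ≤ t₂/(t₁+t₂) := by positivity
      refine ⟨(f xbar - f p) * (t₂/(t₁+t₂)) * (f xbar - f pm)⁻¹,
        (f xbar - f p) * (t₁/(t₁+t₂)) * (f xbar - f pM)⁻¹, ?_, ?_, ?_⟩
      · have h1 := hspos p hp
        have h2 := hspos pm hpmC
        positivity
      · have h1 := hspos p hp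
        have h2 := hspos pM hpMC
        positivity
      · rw [hsb p hp, hbcomb]
        simp only [hbdef]
        match_scalars <;> ring
  -- the shift direction
  set c : E := (pm - xbar) + (pM - xbar) with hcdef
  have hfc : f c < 0 := by
    rw [hcdef]
    have h1 := hflt pm hpmC
    have h2 := hflt pM hpMC
    simp only [map_add, map_sub]
    linarith
  have hc0 : c ≠ 0 := by
    intro h
    rw [h] at hfc
    simp at hfc
  -- all contact vectors lie in the ball of radius lambar around c
  have hcball : ∀ p ∈ C, ‖(p - xbar) - c‖ ≤ lambar := by
    intro p hp
    obtain ⟨α, β, hα, hβ, hpc⟩ := hcomb p hp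
    rw [hpc, hcdef]
    exact lemA hα hβ (hCprop pm hpmC).2 (hCprop pM hpMC).2
      (by rw [← hpc]; exact (hCprop p hp).2)
  -- choose a small shift δ
  have hcn : 0 < ‖c‖ := norm_pos_iff.mpr hc0
  set D : Finset E := S.filter (fun p => p ∉ C) with hD
  set η : ℝ := if h : D.Nonempty then D.inf' h (fun p => lambar - ‖p - xbar‖) else 1 with hη
  have hηpos : 0 < η := by
    rw [hη]
    split_ifs with h
    · rw [Finset.lt_inf'_iff]
      intro p hp
      obtain ⟨hpS, hpnC⟩ := Finset.mem_filter.mp hp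
      have hle := hnorm_le p (hSP.mp hpS)
      have hne : ‖p - xbar‖ ≠ lambar := fun heq => hpnC (Finset.mem_filter.mpr ⟨hpS, heq⟩)
      have := lt_of_le_of_ne hle hne
      linarith
    · norm_num
  set δ : ℝ := min (1/2) (η / (2 * ‖c‖)) with hδ
  have hδpos : 0 < δ := by
    rw [hδ]; positivity
  have hδlt1 : δ < 1 := by
    rw [hδ]
    calc min (1/2) (η / (2 * ‖c‖)) ≤ 1/2 := min_le_left _ _
      _ < 1 := by norm_num
  have hδc : δ * ‖c‖ < η := by
    have h1 : δ ≤ η / (2 * ‖c‖) := min_le_right _ _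
    have h2 : δ * ‖c‖ ≤ (η / (2 * ‖c‖)) * ‖c‖ := mul_le_mul_of_nonneg_right h1 (le_of_lt hcn)
    have h3 : (η / (2 * ‖c‖)) * ‖c‖ = η / 2 := by field_simp
    linarith
  -- the new center is strictly better
  refine contra (xbar + δ • c) (fun p hp => ?_)
  have hrw : p - (xbar + δ • c) = (p - xbar) - δ • c := by abel
  rw [hrw]
  by_cases hpC : p ∈ C
  · -- contact point: strict convexity
    have h1 : (p - xbar) ∈ Metric.closedBall (0:E) lambar :=
      mem_closedBall_zero_iff.mpr (le_of_eq (hCprop p hpC).2)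
    have h2 : (p - xbar) - c ∈ Metric.closedBall (0:E) lambar :=
      mem_closedBall_zero_iff.mpr (hcball p hpC)
    have hne : (p - xbar) ≠ (p - xbar) - c := by
      intro h
      apply hc0
      have := sub_eq_self.mp h.symm
      exact this
    have hmem := strictConvex_closedBall ℝ (0:E) lambar h1 h2 hne
      (by linarith : (0:ℝ) < 1 - δ) hδpos (by ring)
    rw [interior_closedBall (0:E) (ne_of_gt hlam_pos)] at hmem
    have hcomb2 : (1 - δ) • (p - xbar) + δ • ((p - xbar) - c) = (p - xbar) - δ • c := by
      module
    rw [hcomb2] at hmem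
    exact mem_ball_zero_iff.mp hmem
  · -- non-contact point: triangle inequality with the margin
    have hDp : p ∈ D := Finset.mem_filter.mpr ⟨hp, hpC⟩
    have hηle : η ≤ lambar - ‖p - xbar‖ := by
      rw [hη, dif_pos ⟨p, hDp⟩]
      exact Finset.inf'_le _ hDp
    calc ‖(p - xbar) - δ • c‖ ≤ ‖p - xbar‖ + ‖δ • c‖ := norm_sub_le _ _
      _ = ‖p - xbar‖ + δ * ‖c‖ := by
          rw [norm_smul, Real.norm_eq_abs, abs_of_pos hδpos]
      _ < lambar := by linarith
end

section
/- In a strictly convex normed plane, if the minimal enclosing disk B(x̄, λ̄) of a finite set P has exactly two points p₁, p₂ of P on its boundary circle, then x̄ = (p₁ + p₂)/2 and λ̄ = ‖p₁ - p₂‖/2. -/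
open Metric Set Filter

theorem minimal_enclosing_disk_of_two_boundary_points
    {E : Type*} [NormedAddCommGroup E] [NormedSpace ℝ E] [StrictConvexSpace ℝ E]
    (hdim : Module.finrank ℝ E = 2)
    (P : Set E) (hPfin : P.Finite)
    (xbar : E) (lambar : ℝ)
    (hsub : P ⊆ Metric.closedBall xbar lambar)
    (hmin : ∀ x : E, ∀ lam : ℝ, P ⊆ Metric.closedBall x lam → lambar ≤ lam)
    (p₁ p₂ : E) (hne : p₁ ≠ p₂)
    (hbd : P ∩ Metric.sphere xbar lambar = {p₁, p₂}) :
    xbar = midpoint ℝ p₁ p₂ ∧ lambar = ‖p₁ - p₂‖ / 2 := by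
  have hp₁ : p₁ ∈ P ∩ Metric.sphere xbar lambar := by rw [hbd]; exact Or.inl rfl
  have hp₂ : p₂ ∈ P ∩ Metric.sphere xbar lambar := by rw [hbd]; exact Or.inr rfl
  have hp₁P := hp₁.1
  have hp₁s : dist p₁ xbar = lambar := hp₁.2
  have hp₂P := hp₂.1
  have hp₂s : dist p₂ xbar = lambar := hp₂.2
  set m := midpoint ℝ p₁ p₂ with hmdef
  have hdm1 : dist p₁ m = dist p₁ p₂ / 2 := by
    rw [hmdef, dist_left_midpoint]
    norm_num
    ring
  have hdm2 : dist p₂ m = dist p₁ p₂ / 2 := by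
    rw [hmdef, dist_right_midpoint]
    norm_num
    ring
  have hdist12 : dist p₁ p₂ ≤ 2 * lambar := by
    calc dist p₁ p₂ ≤ dist p₁ xbar + dist xbar p₂ := dist_triangle _ _ _
    _ = 2 * lambar := by rw [hp₁s, dist_comm, hp₂s]; ring
  have hm1 : dist m p₁ ≤ lambar := by rw [dist_comm, hdm1]; linarith
  have hm2 : dist m p₂ ≤ lambar := by rw [dist_comm, hdm2]; linarith
  have hxm : xbar = m := by
    by_contra hxm
    have key : ∀ p ∈ P, ∀ᶠ t in nhdsWithin (0:ℝ) (Set.Ioi 0),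
        dist p ((1-t) • xbar + t • m) < lambar := by
      intro p hp
      rcases lt_or_eq_of_le (Metric.mem_closedBall.1 (hsub hp)) with hlt | heq
      · -- interior point: continuity
        have hcont : Continuous fun t : ℝ => dist p ((1-t) • xbar + t • m) := by
          fun_prop
        have h0 : (fun t : ℝ => dist p ((1-t) • xbar + t • m)) 0 = dist p xbar := by
          simp
        have := (hcont.tendsto 0).eventually_lt_const (by simpa using hlt)
        exact this.filter_mono nhdsWithin_le_nhds
      · -- boundary point
        have hps : p ∈ P ∩ Metric.sphere xbar lambar := ⟨hp, heq⟩
        rw [hbd] at hps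
        have hxcb : xbar ∈ Metric.closedBall p lambar := by
          rw [Metric.mem_closedBall, dist_comm]
          exact le_of_eq heq
        have hmcb : m ∈ Metric.closedBall p lambar := by
          rw [Metric.mem_closedBall]
          rcases hps with rfl | rfl
          · exact hm1
          · exact hm2
        filter_upwards [Ioo_mem_nhdsGT_of_mem (Set.mem_Ico.2 ⟨le_refl (0:ℝ), zero_lt_one⟩)]
          with t ht
        have := combo_mem_ball_of_ne hxcb hmcb hxm (by linarith [ht.2] : (0:ℝ) < 1 - t) ht.1
          (by ring)
        rw [Metric.mem_ball, dist_comm] at this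
        exact this
    obtain ⟨t, ht⟩ := ((Filter.eventually_all_finite hPfin).2 key).exists
    set x' := (1-t) • xbar + t • m with hx'
    have hPne : P.Nonempty := ⟨p₁, hp₁P⟩
    obtain ⟨p₀, hp₀P, hp₀max⟩ :=
      Set.Finite.exists_maximalFor (fun p => dist p x') P hPfin hPne
    have hsub' : P ⊆ Metric.closedBall x' (dist p₀ x') := by
      intro p hp
      rw [Metric.mem_closedBall]
      by_contra hgt
      push_neg at hgt
      exact absurd (hp₀max hp (le_of_lt hgt)) (not_le.2 hgt)
    have := hmin x' (dist p₀ x') hsub'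
    exact absurd (ht p₀ hp₀P) (not_lt.2 this)
  refine ⟨hxm, ?_⟩
  rw [← hp₁s, hxm, dist_comm, dist_comm m p₁] at *
  rw [← dist_eq_norm]
  linarith [hdm1]
end

section
/- In a strictly convex normed plane, there is no doubly norm-right triangle: no triangle can be norm-right at two of its vertices. -/
theorem no_doubly_norm_right_triangle
    {E : Type*} [NormedAddCommGroup E] [NormedSpace ℝ E] [StrictConvexSpace ℝ E]
    (hdim : Module.finrank ℝ E = 2)
    (p₁ p₂ p₃ : E) (hcol : ¬ Collinear ℝ ({p₁, p₂, p₃} : Set E)) :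
    ¬ (‖p₁ - midpoint ℝ p₂ p₃‖ = ‖p₂ - p₃‖ / 2 ∧
       ‖p₂ - midpoint ℝ p₁ p₃‖ = ‖p₁ - p₃‖ / 2) := by
  rintro ⟨h1, h2⟩
  have hne12 : p₁ ≠ p₂ := by
    rintro rfl
    exact hcol (by simpa using collinear_pair ℝ p₁ p₃)
  have hne23 : p₂ ≠ p₃ := by
    rintro rfl
    refine hcol ?_
    have : ({p₁, p₂, p₂} : Set E) = {p₂, p₁} := by
      ext x; simp [or_comm]
    rw [this]
    exact collinear_pair ℝ p₂ p₁
  set u : E := p₁ - midpoint ℝ p₂ p₃ with hu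
  set v : E := p₂ - midpoint ℝ p₂ p₃ with hv
  have hvnorm : ‖v‖ = ‖p₂ - p₃‖ / 2 := by
    have : v = (2 : ℝ)⁻¹ • (p₂ - p₃) := by
      rw [hv, midpoint_eq_smul_add, invOf_eq_inv]
      module
    rw [this, norm_smul]
    simp [div_eq_inv_mul]
  have huv : ‖u‖ = ‖v‖ := by rw [hvnorm]; exact h1
  have hsum : u + v = p₁ - p₃ := by
    rw [hu, hv, midpoint_eq_smul_add, invOf_eq_inv]
    module
  have hdiff : (3 : ℝ) • v - u = (2 : ℝ) • (p₂ - midpoint ℝ p₁ p₃) := by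
    rw [hu, hv, midpoint_eq_smul_add, midpoint_eq_smul_add, invOf_eq_inv]
    module
  have hkey : ‖(3 : ℝ) • v - u‖ = ‖u + v‖ := by
    rw [hdiff, hsum, norm_smul, h2]
    simp
    ring
  have hvne : v ≠ 0 := by
    rw [hv, sub_ne_zero]
    intro h
    exact hne23 ((midpoint_eq_left_iff (R := ℝ)).mp h.symm)
  have hvpos : (0 : ℝ) < ‖v‖ := norm_pos_iff.mpr hvne
  have huvne : u ≠ v := by
    intro h
    apply hne12
    have := sub_eq_zero.mpr h
    rw [hu, hv] at this
    have : p₁ - p₂ = 0 := by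
      have h2' : p₁ - midpoint ℝ p₂ p₃ - (p₂ - midpoint ℝ p₂ p₃) = p₁ - p₂ := by abel
      rw [h2'] at this; exact this
    exact sub_eq_zero.mp this
  have hnotray : ¬ SameRay ℝ u v := fun h => huvne (h.eq_of_norm_eq huv)
  have hlt : ‖u + v‖ < ‖u‖ + ‖v‖ := norm_add_lt_of_not_sameRay hnotray
  have hge : (3 : ℝ) * ‖v‖ - ‖u‖ ≤ ‖(3 : ℝ) • v - u‖ := by
    have := norm_sub_norm_le ((3 : ℝ) • v) u
    rw [norm_smul] at this
    simpa using this
  rw [huv] at hlt hge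
  rw [hkey] at hge
  linarith
end

section
/- In a strictly convex normed plane, a triangle {p₁, p₂, p₃} cannot simultaneously be norm-right at p₁ and isosceles with ‖p₂ - p₃‖ = ‖p₁ - p₂‖ > ‖p₁ - p₃‖. -/
theorem no_norm_right_isosceles_triangle
    {E : Type*} [NormedAddCommGroup E] [NormedSpace ℝ E] [StrictConvexSpace ℝ E]
    (hdim : Module.finrank ℝ E = 2)
    (p₁ p₂ p₃ : E) (hcol : ¬ Collinear ℝ ({p₁, p₂, p₃} : Set E)) :
    ¬ (‖p₁ - midpoint ℝ p₂ p₃‖ = ‖p₂ - p₃‖ / 2 ∧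
       ‖p₂ - p₃‖ = ‖p₁ - p₂‖ ∧ ‖p₁ - p₃‖ < ‖p₁ - p₂‖) := by
  rintro ⟨h1, h2, h3⟩
  set a := p₁ - p₂ with ha
  set b := p₁ - p₃ with hb
  have hm : p₁ - midpoint ℝ p₂ p₃ = (2:ℝ)⁻¹ • (a + b) := by
    rw [midpoint_eq_smul_add, invOf_eq_inv, ha, hb]
    module
  have hsub : p₂ - p₃ = b - a := by rw [ha, hb]; abel
  have h1' : ‖a + b‖ = ‖b - a‖ := by
    have := h1
    rw [hm, hsub, norm_smul] at this
    simp only [norm_inv, Real.norm_ofNat] at this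
    linarith
  have hab : ‖a - b‖ = ‖a‖ := by
    rw [norm_sub_rev, ← hsub]; exact h2
  have hab2 : ‖a + b‖ = ‖a‖ := by rw [h1', ← norm_sub_rev, hab]
  have hsum : ‖(a + b) + (a - b)‖ = ‖a + b‖ + ‖a - b‖ := by
    have : (a + b) + (a - b) = (2:ℝ) • a := by module
    rw [this, norm_smul, hab2, hab]
    simp; ring
  have heq : a + b = a - b := eq_of_norm_eq_of_norm_add_eq (by rw [hab2, hab]) hsum
  have hb0 : b = 0 := by
    have : (2:ℝ) • b = 0 := by
      have : (a + b) - (a - b) = (2:ℝ) • b := by module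
      rw [← this, heq, sub_self]
    simpa using this
  have hp : p₃ = p₁ := by
    have : p₁ - p₃ = 0 := hb0
    linear_combination (norm := abel) -this
  apply hcol
  rw [hp]
  have : ({p₁, p₂, p₁} : Set E) = {p₁, p₂} := by ext x; simp; tauto
  rw [this]
  exact collinear_pair ℝ p₁ p₂
end

section
/- In a normed plane whose unit circle contains no line segment parallel to the line through p and q, no three points of the bisector of p and q together with p are collinear in the following sense: if z and w are distinct points of the bisector, then w does not lie on the ray {αz + (1-α)p : α ≥ 1}. -/
lemma seg_on_sphere_aux {E : Type*} [NormedAddCommGroup E] [NormedSpace ℝ E] {u v : E}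
    (hu : ‖u‖ = 1) (hv : ‖v‖ = 1) {l : ℝ} (hl0 : 0 < l) (hl1 : l < 1)
    (h : ‖l • u + (1 - l) • v‖ = 1) :
    segment ℝ u v ⊆ Metric.sphere (0 : E) 1 := by
  rintro x ⟨s, t, hs, ht, hst, rfl⟩
  obtain rfl : t = 1 - s := by linarith
  have hs1 : s ≤ 1 := by linarith
  have hx_le : ‖s • u + (1 - s) • v‖ ≤ 1 := by
    calc ‖s • u + (1 - s) • v‖ ≤ ‖s • u‖ + ‖(1 - s) • v‖ := norm_add_le _ _
    _ = 1 := by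
        rw [norm_smul, norm_smul, hu, hv, Real.norm_eq_abs, Real.norm_eq_abs,
          abs_of_nonneg hs, abs_of_nonneg (by linarith)]; ring
  have hx_ge : 1 ≤ ‖s • u + (1 - s) • v‖ := by
    rcases le_total s l with hcase | hcase
    · have key : (1 - s) • (l • u + (1 - l) • v)
          = (1 - l) • (s • u + (1 - s) • v) + (l - s) • u := by module
      have h1 : (1 - s) = ‖(1 - l) • (s • u + (1 - s) • v) + (l - s) • u‖ := by
        rw [← key, norm_smul, h, Real.norm_eq_abs, abs_of_nonneg (by linarith)]; ring
      have h2 : ‖(1 - l) • (s • u + (1 - s) • v) + (l - s) • u‖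
          ≤ (1 - l) * ‖s • u + (1 - s) • v‖ + (l - s) := by
        calc ‖(1 - l) • (s • u + (1 - s) • v) + (l - s) • u‖
            ≤ ‖(1 - l) • (s • u + (1 - s) • v)‖ + ‖(l - s) • u‖ := norm_add_le _ _
        _ = (1 - l) * ‖s • u + (1 - s) • v‖ + (l - s) := by
            rw [norm_smul, norm_smul, hu, Real.norm_eq_abs, Real.norm_eq_abs,
              abs_of_nonneg (by linarith), abs_of_nonneg (by linarith)]; ring
      nlinarith
    · have key : s • (l • u + (1 - l) • v)
          = l • (s • u + (1 - s) • v) + (s - l) • v := by module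
      have h1 : s = ‖l • (s • u + (1 - s) • v) + (s - l) • v‖ := by
        rw [← key, norm_smul, h, Real.norm_eq_abs, abs_of_nonneg (by linarith)]; ring
      have h2 : ‖l • (s • u + (1 - s) • v) + (s - l) • v‖
          ≤ l * ‖s • u + (1 - s) • v‖ + (s - l) := by
        calc ‖l • (s • u + (1 - s) • v) + (s - l) • v‖
            ≤ ‖l • (s • u + (1 - s) • v)‖ + ‖(s - l) • v‖ := norm_add_le _ _
        _ = l * ‖s • u + (1 - s) • v‖ + (s - l) := by
            rw [norm_smul, norm_smul, hv, Real.norm_eq_abs, Real.norm_eq_abs,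
              abs_of_nonneg (by linarith), abs_of_nonneg (by linarith)]; ring
      nlinarith
  simpa [Metric.mem_sphere, dist_eq_norm] using le_antisymm hx_le hx_ge

theorem bisector_point_not_on_ray
    {E : Type*} [NormedAddCommGroup E] [NormedSpace ℝ E]
    (hdim : Module.finrank ℝ E = 2)
    (p q : E) (hpq : p ≠ q)
    (hseg : ∀ u v : E, ‖u‖ = 1 → ‖v‖ = 1 → u ≠ v →
      (∃ t : ℝ, u - v = t • (q - p)) → ¬ segment ℝ u v ⊆ Metric.sphere (0 : E) 1)
    (z : E) (hz : ‖z - p‖ = ‖z - q‖)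
    (w : E) (hw : ‖w - p‖ = ‖w - q‖) (hwz : w ≠ z) :
    ¬ ∃ α : ℝ, 1 ≤ α ∧ w = α • z + (1 - α) • p := by
  rintro ⟨α, hα, hw'⟩
  -- z ≠ p
  have hzp : z - p ≠ 0 := by
    intro h0
    have hz0 : z = p := by rwa [sub_eq_zero] at h0
    apply hpq
    have : ‖z - q‖ = 0 := by rw [← hz, h0, norm_zero]
    have : z = q := by rwa [norm_eq_zero, sub_eq_zero] at this
    rw [← hz0, this]
  set r : ℝ := ‖z - p‖ with hr_def
  have hr : 0 < r := norm_pos_iff.mpr hzp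
  have hα1 : 1 < α := by
    rcases lt_or_eq_of_le hα with h | h
    · exact h
    · exfalso; apply hwz; rw [hw', ← h]; module
  have hα0 : (0 : ℝ) < α := by linarith
  -- norm of w - q
  have hwp : w - p = α • (z - p) := by rw [hw']; module
  have hnorm_wq : ‖w - q‖ = α * r := by
    rw [← hw, hwp, norm_smul, Real.norm_eq_abs, abs_of_pos hα0]
  set u : E := r⁻¹ • (z - p) with hu_def
  set v : E := r⁻¹ • (z - q) with hv_def
  have hrne : r ≠ 0 := ne_of_gt hr
  have hu : ‖u‖ = 1 := by
    rw [hu_def, norm_smul, Real.norm_eq_abs, abs_of_pos (inv_pos.mpr hr), ← hr_def,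
      inv_mul_cancel₀ hrne]
  have hv : ‖v‖ = 1 := by
    rw [hv_def, norm_smul, Real.norm_eq_abs, abs_of_pos (inv_pos.mpr hr), ← hz,
      inv_mul_cancel₀ hrne]
  have huv : u - v = r⁻¹ • (q - p) := by rw [hu_def, hv_def]; module
  have hne : u ≠ v := by
    intro h
    have : r⁻¹ • (q - p) = 0 := by rw [← huv, h, sub_self]
    rcases smul_eq_zero.mp this with h' | h'
    · exact (inv_ne_zero hrne) h'
    · exact hpq (sub_eq_zero.mp h').symm
  set l : ℝ := (α - 1) / α with hl_def
  have hl0 : 0 < l := div_pos (by linarith) hα0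
  have hl1 : l < 1 := (div_lt_one hα0).mpr (by linarith)
  have key : l • u + (1 - l) • v = (α * r)⁻¹ • (w - q) := by
    rw [hw', hu_def, hv_def, hl_def]
    match_scalars <;> field_simp <;> ring
  have hnorm : ‖l • u + (1 - l) • v‖ = 1 := by
    rw [key, norm_smul, hnorm_wq, Real.norm_eq_abs,
      abs_of_pos (inv_pos.mpr (mul_pos hα0 hr)), inv_mul_cancel₀ (by positivity)]
  exact hseg u v hu hv hne ⟨r⁻¹, huv⟩ (seg_on_sphere_aux hu hv hl0 hl1 hnorm)
end

section
/- In a strictly convex normed plane, if p is a point of a finite set P that is not an extreme point of the convex hull of P, then the farthest-point Voronoi region of p is empty. -/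
theorem farthest_point_voronoi_region_empty_of_not_extreme
    {E : Type*} [NormedAddCommGroup E] [NormedSpace ℝ E] [StrictConvexSpace ℝ E]
    (hdim : Module.finrank ℝ E = 2)
    (P : Set E) (hPfin : P.Finite) (p : E) (hp : p ∈ P)
    (hnotext : p ∈ convexHull ℝ (P \ {p})) :
    {y : E | ∀ q ∈ P \ {p}, ‖y - q‖ ≤ ‖y - p‖} = ∅ := by
  rw [Set.eq_empty_iff_forall_notMem]
  intro y hy
  set S := P \ {p} with hS
  set r := ‖y - p‖ with hr
  have hSball : S ⊆ Metric.closedBall y r := by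
    intro q hq
    rw [Metric.mem_closedBall, dist_eq_norm, norm_sub_rev]
    exact hy q hq
  have hhull : convexHull ℝ S ⊆ Metric.closedBall y r :=
    convexHull_min hSball (convex_closedBall y r)
  -- p is an extreme point of convexHull S, hence p ∈ S, contradiction
  have hpext : p ∈ Set.extremePoints ℝ (convexHull ℝ S) := by
    rw [mem_extremePoints_iff_forall_segment]
    refine ⟨hnotext, fun x₁ hx₁ x₂ hx₂ hseg => ?_⟩
    by_cases h12 : x₁ = x₂
    · subst h12
      simp only [segment_same, Set.mem_singleton_iff] at hseg
      exact Or.inl hseg.symm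
    · rcases eq_or_ne x₁ p with h1 | h1
      · exact Or.inl h1
      rcases eq_or_ne x₂ p with h2 | h2
      · exact Or.inr h2
      exfalso
      have hop : p ∈ openSegment ℝ x₁ x₂ :=
        mem_openSegment_of_ne_left_right h1 h2 hseg
      have := openSegment_subset_ball_of_ne (hhull hx₁) (hhull hx₂) h12 hop
      rw [Metric.mem_ball, dist_comm, dist_eq_norm] at this
      exact lt_irrefl r this
  have := extremePoints_convexHull_subset hpext
  exact this.2 rfl
end

section
/- A normed plane (ℝ², ‖·‖) is strictly convex if and only if for every nonempty compact set P ⊂ ℝ² the set of centers of minimal enclosing disks of P is a singleton. -/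
open Metric Set

theorem strictConvex_iff_unique_minimal_enclosing_center
    {E : Type*} [NormedAddCommGroup E] [NormedSpace ℝ E]
    (hdim : Module.finrank ℝ E = 2) :
    StrictConvexSpace ℝ E ↔
      ∀ P : Set E, P.Nonempty → IsCompact P →
        ∃! x : E, ∀ y : E,
          sSup ((fun p => ‖x - p‖) '' P) ≤ sSup ((fun p => ‖y - p‖) '' P) := by
  constructor
  · intro hsc P hPne hPc
    have hfd : FiniteDimensional ℝ E := FiniteDimensional.of_finrank_pos (by omega)
    set f : E → ℝ := fun x => sSup ((fun p => ‖x - p‖) '' P) with hf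
    have hne : ∀ x : E, ((fun p => ‖x - p‖) '' P).Nonempty := fun x => hPne.image _
    have hbdd : ∀ x : E, BddAbove ((fun p => ‖x - p‖) '' P) := fun x =>
      (hPc.image (by continuity)).bddAbove
    have hle : ∀ x : E, ∀ p ∈ P, ‖x - p‖ ≤ f x := fun x p hp =>
      le_csSup (hbdd x) ⟨p, hp, rfl⟩
    have hub : ∀ (x : E) (b : ℝ), (∀ p ∈ P, ‖x - p‖ ≤ b) → f x ≤ b := fun x b h =>
      csSup_le (hne x) (by rintro _ ⟨p, hp, rfl⟩; exact h p hp)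
    have hlip : ∀ x y : E, f x ≤ f y + ‖x - y‖ := by
      intro x y
      refine hub x _ fun p hp => ?_
      have h1 : ‖x - p‖ ≤ ‖y - p‖ + ‖x - y‖ := by
        have := norm_add_le (y - p) (x - y)
        have h2 : (y - p) + (x - y) = x - p := by abel
        rw [h2] at this
        linarith
      linarith [hle y p hp]
    have hcont : Continuous f := by
      refine LipschitzWith.continuous (K := 1) (LipschitzWith.of_dist_le_mul fun x y => ?_)
      rw [NNReal.coe_one, one_mul, Real.dist_eq, dist_eq_norm, abs_sub_le_iff]
      constructor
      · linarith [hlip x y]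
      · have := hlip y x
        rw [norm_sub_rev] at this
        linarith
    obtain ⟨p₀, hp₀⟩ := hPne
    have h0 : (0:ℝ) ≤ f p₀ := by
      have := hle p₀ p₀ hp₀
      simpa using this.trans_eq' (by simp)
    obtain ⟨x, hxK, hxmin⟩ := (isCompact_closedBall p₀ (f p₀)).exists_isMinOn
      ⟨p₀, mem_closedBall_self h0⟩ hcont.continuousOn
    have hxg : ∀ y, f x ≤ f y := by
      intro y
      by_cases hy : y ∈ closedBall p₀ (f p₀)
      · exact hxmin hy
      · rw [mem_closedBall, dist_eq_norm, not_le] at hy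
        have h1 : f x ≤ f p₀ := hxmin (mem_closedBall_self h0)
        linarith [hle y p₀ hp₀]
    refine ⟨x, hxg, fun z hz => ?_⟩
    have hfz : f z = f x := le_antisymm (hz x) (hxg z)
    set m := (2:ℝ)⁻¹ • (z + x) with hm
    obtain ⟨p, hpP, hpmax⟩ := hPc.exists_isMaxOn ⟨p₀, hp₀⟩
      (Continuous.continuousOn (by continuity) : ContinuousOn (fun p => ‖m - p‖) P)
    have hfm : f m = ‖m - p‖ := le_antisymm (hub m _ fun q hq => hpmax hq) (hle m p hpP)
    have hsum : (z - p) + (x - p) = (2:ℝ) • (m - p) := by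
      rw [hm]; module
    have h2 : ‖(z - p) + (x - p)‖ = 2 * f m := by
      rw [hsum, norm_smul, hfm]; norm_num
    have hzp : ‖z - p‖ ≤ f x := hfz ▸ hle z p hpP
    have hxp : ‖x - p‖ ≤ f x := hle x p hpP
    have htri : ‖(z - p) + (x - p)‖ ≤ ‖z - p‖ + ‖x - p‖ := norm_add_le _ _
    have hge : 2 * f x ≤ ‖(z - p) + (x - p)‖ := by
      rw [h2]; linarith [hxg m]
    have heq1 : ‖z - p‖ = ‖x - p‖ := by linarith
    have heq2 : ‖(z - p) + (x - p)‖ = ‖z - p‖ + ‖x - p‖ := by linarith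
    have := eq_of_norm_eq_of_norm_add_eq heq1 heq2
    exact sub_left_inj.mp this
  · intro h
    refine StrictConvexSpace.of_norm_add_ne_two fun u v hu hv huv habs => ?_
    set c : E := (2:ℝ)⁻¹ • (u + v) with hcdef
    set d : E := (2:ℝ)⁻¹ • (u - v) with hddef
    have hc : ‖c‖ = 1 := by
      rw [hcdef, norm_smul, habs]; norm_num
    obtain ⟨x₀, _, huniq⟩ := h {c, -c} ⟨c, Or.inl rfl⟩
      ((Set.toFinite {c, -c}).isCompact)
    have key : ∀ x : E, sSup ((fun p => ‖x - p‖) '' {c, -c}) = max ‖x - c‖ ‖x + c‖ := by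
      intro x
      rw [Set.image_pair, csSup_pair, sub_neg_eq_add]
    have hbig : ∀ y : E, (1:ℝ) ≤ max ‖y - c‖ ‖y + c‖ := by
      intro y
      have h1 : (2:ℝ) = ‖(y + c) - (y - c)‖ := by
        have : (y + c) - (y - c) = (2:ℝ) • c := by module
        rw [this, norm_smul, hc]; norm_num
      have h2 : ‖(y + c) - (y - c)‖ ≤ ‖y + c‖ + ‖y - c‖ := norm_sub_le _ _
      have h3 := le_max_left ‖y - c‖ ‖y + c‖
      have h4 := le_max_right ‖y - c‖ ‖y + c‖
      linarith
    have hdc1 : ‖d - c‖ = 1 := by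
      have : d - c = -v := by rw [hddef, hcdef]; module
      rw [this, norm_neg, hv]
    have hdc2 : ‖d + c‖ = 1 := by
      have : d + c = u := by rw [hddef, hcdef]; module
      rw [this, hu]
    have h0c : ∀ y : E, sSup ((fun p => ‖(0:E) - p‖) '' {c, -c}) ≤
        sSup ((fun p => ‖y - p‖) '' {c, -c}) := by
      intro y
      rw [key, key]
      have : max ‖(0:E) - c‖ ‖(0:E) + c‖ = 1 := by
        simp [norm_neg, hc]
      rw [this]
      exact hbig y
    have hdc : ∀ y : E, sSup ((fun p => ‖d - p‖) '' {c, -c}) ≤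
        sSup ((fun p => ‖y - p‖) '' {c, -c}) := by
      intro y
      rw [key, key, hdc1, hdc2]
      simpa using hbig y
    have e0 : (0:E) = x₀ := huniq 0 h0c
    have ed : d = x₀ := huniq d hdc
    have : d = 0 := ed.trans e0.symm
    rw [hddef] at this
    have : u - v = 0 := by
      have h2 := congrArg (fun w => (2:ℝ) • w) this
      simpa [smul_smul] using h2
    exact huv (sub_eq_zero.mp this)
end

section
/- Let H⁺ be a closed half-plane bounded by the line through distinct points p₁, p₂ in a strictly convex normed plane, let bisec⁺(p₁,p₂) = bisec(p₁,p₂) ∩ H⁺, and let γ : [0,∞) → bisec⁺(p₁,p₂) be a homeomorphism with γ(0) = (p₁+p₂)/2. Then the map φ(t) = ‖p₁ - γ(t)‖ is a strictly increasing bijection from [0,∞) onto [‖p₁ - p₂‖/2, ∞). -/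
open Set

/-- Convexity bound: points s ≥ 0 outside. -/
lemma bisector_outside_right {E : Type*} [NormedAddCommGroup E] [NormedSpace ℝ E]
    (c u : E) {r : ℝ} (hc : ‖c‖ = r) (hcu : ‖c - u‖ = r) {s : ℝ} (hs : 0 ≤ s) :
    r ≤ ‖c + s • u‖ := by
  have h1 : (0:ℝ) < 1 + s := by linarith
  have key : c = (s/(1+s)) • (c - u) + (1/(1+s)) • (c + s • u) := by
    match_scalars <;> field_simp <;> ring
  have hle : ‖c‖ ≤ (s/(1+s)) * ‖c - u‖ + (1/(1+s)) * ‖c + s • u‖ := by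
    calc ‖c‖ = ‖(s/(1+s)) • (c - u) + (1/(1+s)) • (c + s • u)‖ := by rw [← key]
    _ ≤ ‖(s/(1+s)) • (c - u)‖ + ‖(1/(1+s)) • (c + s • u)‖ := norm_add_le _ _
    _ = (s/(1+s)) * ‖c - u‖ + (1/(1+s)) * ‖c + s • u‖ := by
        rw [norm_smul, norm_smul, Real.norm_eq_abs, Real.norm_eq_abs,
          abs_of_nonneg (by positivity), abs_of_nonneg (by positivity)]
  rw [hc, hcu] at hle
  have h2 : 0 < 1/(1+s) := by positivity
  have h3 : s / (1 + s) + 1 / (1 + s) = 1 := by field_simp; ring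
  have h4 : 1/(1+s) * r ≤ 1/(1+s) * ‖c + s • u‖ := by
    have h5 : (s/(1+s))*r + (1/(1+s))*r = r := by rw [← add_mul, h3, one_mul]
    linarith
  exact (mul_le_mul_iff_right₀ h2).mp h4

lemma bisector_outside_left {E : Type*} [NormedAddCommGroup E] [NormedSpace ℝ E]
    (c u : E) {r : ℝ} (hc : ‖c‖ = r) (hcu : ‖c - u‖ = r) {s : ℝ} (hs : s ≤ -1) :
    r ≤ ‖c + s • u‖ := by
  have h := bisector_outside_right (c - u) (-u) (r := r) hcu (by simpa using hc)
    (s := -(s+1)) (by linarith)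
  have : (c - u) + (-(s+1)) • (-u) = c + s • u := by module
  rwa [this] at h


/-- The asymmetric case: `f a < f b` leads to a contradiction. -/
lemma bisector_key_lt {E : Type*} [NormedAddCommGroup E] [NormedSpace ℝ E] [StrictConvexSpace ℝ E]
    (f : E →L[ℝ] ℝ) (u : E) (hu : u ≠ 0) (hfu : f u = 0)
    (hker : ∀ v : E, f v = 0 → ∃ t : ℝ, v = t • u)
    (a b : E) (ha : ‖a‖ = ‖a - u‖) (hb : ‖b‖ = ‖b - u‖) (hr : ‖a‖ = ‖b‖)
    (hfa : 0 ≤ f a) (hfab : f a < f b) : False := by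
  set r : ℝ := ‖a‖ with hrdef
  have houtside : ∀ t : ℝ, ‖a + t • u‖ < r → -1 < t ∧ t < 0 := by
    intro t hlt
    constructor
    · by_contra h
      push_neg at h
      exact absurd (bisector_outside_left a u hrdef.symm ha.symm h) (not_le.mpr hlt)
    · by_contra h
      push_neg at h
      exact absurd (bisector_outside_right a u hrdef.symm ha.symm h) (not_le.mpr hlt)
  rcases eq_or_lt_of_le hfa with hfa0 | hfa0
  · -- f a = 0 : a is the midpoint, b must be too
    obtain ⟨s, hs⟩ := hker a hfa0.symm
    have hu0 : (0:ℝ) < ‖u‖ := norm_pos_iff.mpr hu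
    have habs : |s| * ‖u‖ = |s - 1| * ‖u‖ := by
      have h1 : (s - 1) • u = a - u := by rw [hs]; module
      have e1 : ‖s • u‖ = ‖(s - 1) • u‖ := by
        rw [h1, ← hs, ← hrdef]; exact ha
      rwa [norm_smul, norm_smul, Real.norm_eq_abs, Real.norm_eq_abs] at e1
    have hs12 : s = 1/2 := by
      have h2 : |s| = |s - 1| := mul_right_cancel₀ (ne_of_gt hu0) habs
      rcases abs_eq_abs.mp h2 with h | h
      · linarith
      · linarith
    have hrval : r = ‖u‖ / 2 := by
      rw [hrdef, hs, hs12, norm_smul, Real.norm_eq_abs]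
      rw [abs_of_nonneg (by norm_num : (0:ℝ) ≤ 1/2)]
      ring
    have hbu : ‖u - b‖ = r := by rw [norm_sub_rev, ← hb, ← hr]
    have hbr : ‖b‖ = r := hr.symm
    have hadd : ‖b + (u - b)‖ = ‖b‖ + ‖u - b‖ := by
      rw [add_sub_cancel, hbu, hbr, hrval]; ring
    have hbeq : b = u - b := eq_of_norm_eq_of_norm_add_eq (by rw [hbu, hbr]) hadd
    have : f b = 0 := by
      have h3 : f b = f u - f b := by rw [← map_sub]; exact congrArg f hbeq
      rw [hfu] at h3; linarith
    rw [← hfa0] at hfab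
    linarith [this, hfab]
  · -- 0 < f a < f b
    set lam : ℝ := 2 * f a / (f b + f a) with hlam
    have hden : (0:ℝ) < f b + f a := by linarith
    have hlam0 : 0 < lam := div_pos (by linarith) hden
    have hlam1 : lam < 1 := by
      rw [hlam, div_lt_one hden]; linarith
    set a'' : E := u - a with ha''
    have hfa'' : f a'' = -f a := by rw [ha'', map_sub, hfu]; ring
    have hna : ‖a''‖ = r := by rw [ha'', norm_sub_rev, ← ha]
    have hnau : ‖a'' - u‖ = r := by
      have : a'' - u = -a := by rw [ha'']; module
      rw [this, norm_neg]
    have hne : a'' ≠ b := by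
      intro h
      rw [h] at hfa''
      linarith
    set z : E := (1 - lam) • a'' + lam • b with hz
    have h1 : ‖z‖ < r :=
      norm_combo_lt_of_ne (a := 1 - lam) (b := lam) hna.le hr.ge hne (by linarith) hlam0
        (by ring)
    have h2 : ‖z - u‖ < r := by
      have hzu : z - u = (1 - lam) • (a'' - u) + lam • (b - u) := by rw [hz]; module
      have hbu : ‖b - u‖ ≤ r := by rw [← hb, ← hr]
      have hne2 : a'' - u ≠ b - u := fun h => hne (by
        have := sub_left_injective h; exact this)
      rw [hzu]
      exact norm_combo_lt_of_ne (a := 1 - lam) (b := lam) hnau.le hbu hne2 (by linarith)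
        hlam0 (by ring)
    have hfz : f z = f a := by
      rw [hz, map_add, map_smul, map_smul, hfa'', smul_eq_mul, smul_eq_mul, hlam]
      field_simp
      ring
    obtain ⟨t, htz⟩ := hker (z - a) (by rw [map_sub, hfz, sub_self])
    have hzat : z = a + t • u := by rw [← htz]; abel
    have hI1 := houtside t (by rw [← hzat]; exact h1)
    have hI2 := houtside (t - 1) (by
      have : a + (t - 1) • u = z - u := by rw [hzat]; module
      rw [this]; exact h2)
    linarith [hI1.1, hI1.2, hI2.1, hI2.2]

/-- Key uniqueness: two points of the positive half bisector at equal distance coincide. -/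
lemma bisector_key {E : Type*} [NormedAddCommGroup E] [NormedSpace ℝ E] [StrictConvexSpace ℝ E]
    (f : E →L[ℝ] ℝ) (u : E) (hu : u ≠ 0) (hfu : f u = 0)
    (hker : ∀ v : E, f v = 0 → ∃ t : ℝ, v = t • u)
    (a b : E) (ha : ‖a‖ = ‖a - u‖) (hb : ‖b‖ = ‖b - u‖) (hr : ‖a‖ = ‖b‖)
    (hfa : 0 ≤ f a) (hfb : 0 ≤ f b) : a = b := by
  set r : ℝ := ‖a‖ with hrdef
  -- helper: if ‖a + t • u‖ < r then -1 < t < 0, and similarly shifted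
  have houtside : ∀ t : ℝ, ‖a + t • u‖ < r → -1 < t ∧ t < 0 := by
    intro t hlt
    constructor
    · by_contra h
      push_neg at h
      exact absurd (bisector_outside_left a u hrdef.symm ha.symm h) (not_le.mpr hlt)
    · by_contra h
      push_neg at h
      exact absurd (bisector_outside_right a u hrdef.symm ha.symm h) (not_le.mpr hlt)
  -- strict convexity: distinct points on sphere, inner combos strictly inside
  have hcombo : ∀ s₁ s₂ μ : ℝ, s₁ ≠ s₂ → 0 < μ → μ < 1 →
      ‖a + s₁ • u‖ = r → ‖a + s₂ • u‖ = r → ‖a + (μ * s₁ + (1 - μ) * s₂) • u‖ < r := by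
    intro s₁ s₂ μ hne hμ0 hμ1 h₁ h₂
    have hne' : a + s₁ • u ≠ a + s₂ • u := by
      intro h
      apply hne
      have : (s₁ - s₂) • u = 0 := by
        have := sub_eq_zero.mpr h
        rw [sub_smul]; abel_nf; abel_nf at this; linear_combination (norm := module) this
      rcases smul_eq_zero.mp this with h' | h'
      · linarith [sub_eq_zero.mp (by linarith [h'] : s₁ - s₂ = 0)]
      · exact absurd h' hu
    have := norm_combo_lt_of_ne (a := μ) (b := 1 - μ) (le_of_eq h₁) (le_of_eq h₂) hne' hμ0 (by linarith) (by ring)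
    have heq : μ • (a + s₁ • u) + (1 - μ) • (a + s₂ • u) = a + (μ * s₁ + (1 - μ) * s₂) • u := by
      module
    rwa [heq] at this
  by_contra hab
  rcases lt_trichotomy (f a) (f b) with hlt | heq | hlt
  -- the two asymmetric cases are symmetric; handle via a общая claim below
  rotate_left
  · -- f a = f b : b = a + t • u with t ≠ 0, four sphere points
    obtain ⟨t, ht⟩ := hker (b - a) (by rw [map_sub, heq, sub_self])
    have hbt : b = a + t • u := by rw [← ht]; abel
    have ht0 : t ≠ 0 := by
      intro h; apply hab; rw [hbt, h, zero_smul, add_zero]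
    have h0 : ‖a + (0:ℝ) • u‖ = r := by simp [hrdef]
    have hm1 : ‖a + (-1:ℝ) • u‖ = r := by
      rw [neg_smul, one_smul, ← sub_eq_add_neg]; exact ha.symm
    have hT : ‖a + t • u‖ = r := by rw [← hbt]; exact hr.symm
    have hT1 : ‖a + (t - 1) • u‖ = r := by
      have : a + (t - 1) • u = b - u := by rw [hbt]; module
      rw [this, ← hb]; exact hr.symm
    rcases lt_trichotomy t 0 with htneg | h | htpos
    · rcases le_or_gt t (-1) with hle | hgt
      · -- inner point -1 between t-1 and 0
        have hμ : (0:ℝ) < 1/(1-t) := div_pos one_pos (by linarith)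
        have hμ1 : 1/(1-t) < 1 := by
          rw [div_lt_one (by linarith)]; linarith
        have := hcombo (t-1) 0 (1/(1-t)) (by intro h; linarith [h]) hμ hμ1 hT1 h0
        have h1t : (1:ℝ) - t ≠ 0 := by linarith
        have harg : 1/(1-t) * (t-1) + (1 - 1/(1-t)) * 0 = -1 := by
          field_simp
          ring
        rw [harg] at this
        exact absurd hm1 (ne_of_lt this)
      · -- -1 < t < 0 : inner point t between -1 and 0
        have := hcombo (-1) 0 (-t) (by norm_num) (by linarith) (by linarith) hm1 h0
        have harg : -t * (-1) + (1 - -t) * 0 = t := by ring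
        rw [harg] at this
        exact absurd hT (ne_of_lt this)
    · exact ht0 h
    · -- t > 0 : inner point 0 between -1 and t
      have hμ : (0:ℝ) < t/(1+t) := by positivity
      have hμ1 : t/(1+t) < 1 := by rw [div_lt_one (by linarith)]; linarith
      have := hcombo (-1) t (t/(1+t)) (by intro h; linarith) hμ hμ1 hm1 hT
      have harg : t/(1+t) * (-1) + (1 - t/(1+t)) * t = 0 := by
        have h1t : (1:ℝ) + t ≠ 0 := by linarith
        field_simp
        ring
      rw [harg] at this
      exact absurd h0 (ne_of_lt this)
  · exact bisector_key_lt f u hu hfu hker b a hb ha hr.symm hfb hlt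
  · exact bisector_key_lt f u hu hfu hker a b ha hb hr hfa hlt

theorem bisector_parametrization_strictMono
    {E : Type*} [NormedAddCommGroup E] [NormedSpace ℝ E] [StrictConvexSpace ℝ E]
    (hdim : Module.finrank ℝ E = 2)
    (p₁ p₂ : E) (hne : p₁ ≠ p₂)
    (f : E →L[ℝ] ℝ) (hf : f ≠ 0) (hfp : f p₁ = f p₂)
    (B : Set E) (hB : B = {x | ‖x - p₁‖ = ‖x - p₂‖ ∧ f p₁ ≤ f x})
    (γ : Set.Ici (0 : ℝ) ≃ₜ B)
    (hγ0 : ((γ ⟨0, Set.self_mem_Ici⟩ : B) : E) = midpoint ℝ p₁ p₂) :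
    StrictMono (fun t : Set.Ici (0 : ℝ) => ‖p₁ - ((γ t : B) : E)‖) ∧
      Set.range (fun t : Set.Ici (0 : ℝ) => ‖p₁ - ((γ t : B) : E)‖) =
        Set.Ici (‖p₁ - p₂‖ / 2) := by
  have hfd : FiniteDimensional ℝ E := FiniteDimensional.of_finrank_eq_succ hdim
  set u : E := p₂ - p₁ with hu_def
  have hu : u ≠ 0 := sub_ne_zero.mpr (Ne.symm hne)
  have hfu : f u = 0 := by rw [hu_def, map_sub, hfp, sub_self]
  -- the kernel of f is spanned by u
  have hker : ∀ v : E, f v = 0 → ∃ t : ℝ, v = t • u := by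
    have hsurj : Function.Surjective f := by
      obtain ⟨x, hx⟩ : ∃ x : E, f x ≠ 0 := by
        by_contra h
        push_neg at h
        exact hf (by ext x; exact h x)
      intro c
      exact ⟨(c / f x) • x, by rw [map_smul, smul_eq_mul, div_mul_cancel₀ _ hx]⟩
    have hrange : LinearMap.range (f : E →ₗ[ℝ] ℝ) = ⊤ := LinearMap.range_eq_top_of_surjective (f : E →ₗ[ℝ] ℝ) hsurj
    have hrank := LinearMap.finrank_range_add_finrank_ker (f : E →ₗ[ℝ] ℝ)
    rw [hdim] at hrank
    have hrange' : LinearMap.range (f : E →ₗ[ℝ] ℝ) = ⊤ := by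
      rw [← hrange]
    rw [hrange'] at hrank
    have h1 : Module.finrank ℝ (⊤ : Submodule ℝ ℝ) = 1 := by
      rw [finrank_top]; exact Module.finrank_self ℝ
    rw [h1] at hrank
    have hkerrank : Module.finrank ℝ (LinearMap.ker (f : E →ₗ[ℝ] ℝ)) = 1 := by omega
    have hspan : Submodule.span ℝ {u} = LinearMap.ker (f : E →ₗ[ℝ] ℝ) := by
      apply Submodule.eq_of_le_of_finrank_le
      · rw [Submodule.span_le, Set.singleton_subset_iff]
        exact LinearMap.mem_ker.mpr hfu
      · rw [hkerrank, finrank_span_singleton hu]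
    intro v hv
    have hv' : v ∈ Submodule.span ℝ {u} := by
      rw [hspan]; exact LinearMap.mem_ker.mpr hv
    obtain ⟨t, ht⟩ := Submodule.mem_span_singleton.mp hv'
    exact ⟨t, ht.symm⟩
  subst hB
  set ψ : Set.Ici (0 : ℝ) → ℝ := fun t => ‖p₁ - ((γ t : _) : E)‖ with hψ_def
  have hmemB : ∀ t : Set.Ici (0:ℝ),
      ‖((γ t : _) : E) - p₁‖ = ‖((γ t : _) : E) - p₂‖ ∧ f p₁ ≤ f ((γ t : _) : E) :=
    fun t => (γ t).2
  -- injectivity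
  have hinj : Function.Injective ψ := by
    intro t₁ t₂ h
    set x : E := ((γ t₁ : _) : E) with hx_def
    set y : E := ((γ t₂ : _) : E) with hy_def
    obtain ⟨hx1, hx2⟩ := hmemB t₁
    obtain ⟨hy1, hy2⟩ := hmemB t₂
    have hxy : x - p₁ = y - p₁ := by
      apply bisector_key f u hu hfu hker
      · have : x - p₁ - u = x - p₂ := by rw [hu_def]; abel
        rw [this]; exact hx1
      · have : y - p₁ - u = y - p₂ := by rw [hu_def]; abel
        rw [this]; exact hy1
      · rw [norm_sub_rev, norm_sub_rev y]
        exact h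
      · rw [map_sub]; linarith
      · rw [map_sub]; linarith
    have : x = y := by
      have := sub_left_injective hxy
      exact this
    exact γ.toEquiv.injective (Subtype.ext this)
  have hψcont : Continuous ψ :=
    (continuous_const.sub (continuous_subtype_val.comp γ.continuous)).norm
  -- minimum value
  have hmin : ∀ t, ‖p₁ - p₂‖ / 2 ≤ ψ t := by
    intro t
    obtain ⟨hx1, _⟩ := hmemB t
    set x : E := ((γ t : _) : E)
    have htri : ‖p₁ - p₂‖ ≤ ‖p₁ - x‖ + ‖x - p₂‖ := norm_sub_le_norm_sub_add_norm_sub _ _ _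
    have h2 : ‖x - p₂‖ = ‖p₁ - x‖ := by rw [← hx1, norm_sub_rev]
    rw [h2] at htri
    simp only [hψ_def]
    linarith
  have hψ0 : ψ ⟨0, Set.self_mem_Ici⟩ = ‖p₁ - p₂‖ / 2 := by
    simp only [hψ_def, hγ0]
    have : p₁ - midpoint ℝ p₁ p₂ = (2⁻¹ : ℝ) • (p₁ - p₂) := by
      rw [midpoint_eq_smul_add, invOf_eq_inv]; module
    rw [this, norm_smul, Real.norm_eq_abs]
    rw [abs_of_nonneg (by norm_num : (0:ℝ) ≤ 2⁻¹)]
    ring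
  -- auxiliary real function
  set g : ℝ → ℝ := fun s => ψ ⟨max s 0, le_max_right s 0⟩ with hg_def
  have hgcont : Continuous g :=
    hψcont.comp ((continuous_id.max continuous_const).subtype_mk _)
  have hgψ : ∀ t : Set.Ici (0:ℝ), g t.1 = ψ t := by
    intro t
    simp only [hg_def]
    congr 1
    exact Subtype.ext (max_eq_left t.2)
  have hg0 : g 0 = ‖p₁ - p₂‖ / 2 := by
    rw [hgψ ⟨0, Set.self_mem_Ici⟩]; exact hψ0
  have hginj : ∀ b : ℝ, Set.InjOn g (Set.Icc 0 b) := by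
    intro b s hs s' hs' hss'
    rw [hgψ ⟨s, hs.1⟩, hgψ ⟨s', hs'.1⟩] at hss'
    exact congrArg Subtype.val (hinj hss')
  -- strict monotonicity
  have hsm : StrictMono ψ := by
    intro t₁ t₂ hlt
    have hlt' : (t₁ : ℝ) < t₂ := hlt
    have hmono : StrictMonoOn g (Set.Icc 0 (t₂ : ℝ)) := by
      apply ContinuousOn.strictMonoOn_of_injOn_Icc t₂.2
      · rw [hg0, hgψ t₂]; exact hmin t₂
      · exact hgcont.continuousOn
      · exact hginj _
    have := hmono ⟨t₁.2, hlt'.le⟩ ⟨t₂.2, le_rfl⟩ hlt'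
    rwa [hgψ t₁, hgψ t₂] at this
  -- unboundedness
  have hunb : ∀ M : ℝ, ∃ t, M < ψ t := by
    intro M
    by_contra h
    push_neg at h
    have hBclosed : IsClosed {x : E | ‖x - p₁‖ = ‖x - p₂‖ ∧ f p₁ ≤ f x} := by
      apply IsClosed.inter
      · exact isClosed_eq (continuous_id.sub continuous_const).norm
          (continuous_id.sub continuous_const).norm
      · exact isClosed_le continuous_const f.continuous
    have hBsub : {x : E | ‖x - p₁‖ = ‖x - p₂‖ ∧ f p₁ ≤ f x} ⊆ Metric.closedBall p₁ M := by
      intro x hx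
      have hγx : ((γ (γ.symm ⟨x, hx⟩) : _) : E) = x := by
        rw [Homeomorph.apply_symm_apply]
      have := h (γ.symm ⟨x, hx⟩)
      rw [hψ_def] at this
      simp only [hγx] at this
      rw [Metric.mem_closedBall, dist_eq_norm, norm_sub_rev]
      exact this
    have hcompact : IsCompact {x : E | ‖x - p₁‖ = ‖x - p₂‖ ∧ f p₁ ≤ f x} :=
      Metric.isCompact_of_isClosed_isBounded hBclosed
        (Metric.isBounded_closedBall.subset hBsub)
    haveI : CompactSpace {x : E | ‖x - p₁‖ = ‖x - p₂‖ ∧ f p₁ ≤ f x} :=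
      isCompact_iff_compactSpace.mp hcompact
    haveI : CompactSpace (Set.Ici (0:ℝ)) := γ.symm.compactSpace
    have hIci : IsCompact (Set.Ici (0:ℝ)) := isCompact_iff_compactSpace.mpr this
    have hbdd : BddAbove (Set.Ici (0:ℝ)) :=
      (isBounded_iff_bddBelow_bddAbove.mp hIci.isBounded).2
    exact not_bddAbove_Ici (a := (0:ℝ)) hbdd
  refine ⟨hsm, ?_⟩
  ext y
  constructor
  · rintro ⟨t, rfl⟩
    exact hmin t
  · intro hy
    rw [Set.mem_Ici] at hy
    obtain ⟨t, ht⟩ := hunb y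
    have hIVT := intermediate_value_Icc t.2 hgcont.continuousOn
    have hymem : y ∈ Set.Icc (g 0) (g (t : ℝ)) := by
      rw [hg0, hgψ t]
      exact ⟨hy, ht.le⟩
    obtain ⟨s, hs, hgs⟩ := hIVT hymem
    exact ⟨⟨s, hs.1⟩, by rw [← hgψ ⟨s, hs.1⟩]; exact hgs⟩
end
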